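/- arXiv:2405.07612 — 11 statements merged into one kernel-verified Lean document; each statement's English description precedes it below -/
import Mathlib

section
/- Expansion of the Potts model partition function along deletions (Biggs formula for graphs): Let G = (V, E, ε) be a finite multigraph, K a field, q ∈ K, and let v = (v_e)_{e∈E} and u = (u_e)_{e∈E} be families of nonzero elements of K. Then Z(G; q, v) = (∏_{e∈E} v_e/u_e) · ∑_{F ⊆ E} (∏_{e∈F} (u_e/v_e − 1)) · Z(G − F; q, (u_e)_{e∈E∖F}). -/
open Finset

/-- The number of connected components of the spanning subgraph `(V, A)` of the
multigraph given by `ε : E → Sym2 V`. -/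
noncomputable def multigraphComponents {V E : Type*} (ε : E → Sym2 V) (A : Finset E) : ℕ :=
  Nat.card (SimpleGraph.fromEdgeSet (ε '' (A : Set E))).ConnectedComponent

/-- **Biggs formula for graphs** : expansion of the Potts model partition function
`Z(G;q,v) = ∑_{A ⊆ E} q^{k_G(A)} ∏_{e ∈ A} v_e` along deletions. -/
theorem potts_expansion_deletions {V E K : Type*} [Fintype V] [Fintype E] [DecidableEq E]
    [Field K] (ε : E → Sym2 V) (q : K) (v u : E → K)
    (hv : ∀ e, v e ≠ 0) (hu : ∀ e, u e ≠ 0) :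
    (∑ A ∈ Finset.univ.powerset, q ^ multigraphComponents ε A * ∏ e ∈ A, v e) =
      (∏ e : E, v e / u e) *
        ∑ F ∈ Finset.univ.powerset, (∏ e ∈ F, (u e / v e - 1)) *
          ∑ A ∈ (Finset.univ \ F).powerset,
            q ^ multigraphComponents ε A * ∏ e ∈ A, u e := by
  set T : Finset E → K := fun A => q ^ multigraphComponents ε A * ∏ e ∈ A, u e with hT
  set P : Finset E → K := fun F => ∏ e ∈ F, (u e / v e - 1) with hP
  have step1 :
      (∑ F ∈ Finset.univ.powerset, P F * ∑ A ∈ (Finset.univ \ F).powerset, T A)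
        = ∑ A ∈ Finset.univ.powerset, ∑ F ∈ (Finset.univ \ A).powerset, P F * T A := by
    simp only [Finset.mul_sum]
    apply Finset.sum_comm'
    intro F A
    simp only [Finset.mem_powerset, Finset.subset_univ, true_and, and_true,
      Finset.subset_sdiff]
    constructor
    · intro h x hx hy; exact h hy hx
    · intro h x hx hy; exact h hy hx
  have hinner : ∀ A : Finset E,
      (∑ F ∈ (Finset.univ \ A).powerset, P F)
        = ∏ e ∈ Finset.univ \ A, (u e / v e) := by
    intro A
    have := Finset.prod_add (fun e => u e / v e - 1) (fun _ => (1 : K)) (Finset.univ \ A)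
    simp only [Finset.prod_const_one, mul_one, sub_add_cancel] at this
    exact this.symm
  rw [step1, Finset.mul_sum]
  apply Finset.sum_congr rfl
  intro A hA
  rw [← Finset.sum_mul, hinner A]
  have hC : (∏ e : E, v e / u e)
      = (∏ e ∈ Finset.univ \ A, v e / u e) * ∏ e ∈ A, v e / u e :=
    (Finset.prod_sdiff (Finset.subset_univ A)).symm
  rw [hC, hT]
  have h1 : (∏ e ∈ Finset.univ \ A, v e / u e) * (∏ e ∈ Finset.univ \ A, (u e / v e)) = 1 := by
    rw [← Finset.prod_mul_distrib]
    apply Finset.prod_eq_one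
    intro e _
    field_simp
    rw [mul_comm]
    exact div_self (mul_ne_zero (hu e) (hv e))
  have h2 : (∏ e ∈ A, v e / u e) * ∏ e ∈ A, u e = ∏ e ∈ A, v e := by
    rw [← Finset.prod_mul_distrib]
    exact Finset.prod_congr rfl fun e _ => div_mul_cancel₀ (v e) (hu e)
  calc q ^ multigraphComponents ε A * ∏ e ∈ A, v e
      = ((∏ e ∈ Finset.univ \ A, v e / u e) * (∏ e ∈ Finset.univ \ A, (u e / v e))) *
        (q ^ multigraphComponents ε A * ((∏ e ∈ A, v e / u e) * ∏ e ∈ A, u e)) := by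
        rw [h1, h2]; ring
    _ = (∏ e ∈ Finset.univ \ A, v e / u e) * (∏ e ∈ A, v e / u e) *
        ((∏ e ∈ Finset.univ \ A, u e / v e) *
          (q ^ multigraphComponents ε A * ∏ e ∈ A, u e)) := by ring
end

section
/- Expansion of the Potts model partition function along contractions: Let G = (V, E, ε) be a finite multigraph, K a commutative ring, q ∈ K, and let v = (v_e)_{e∈E} and u = (u_e)_{e∈E} be families in K. Then Z(G; q, v) = ∑_{F ⊆ E} (∏_{e∈F} (v_e − u_e)) · Z(G/F; q, (u_e)_{e∈E∖F}). -/
open Finset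

/-- Expansion of the Potts model partition function
`Z(G;q,v) = ∑_{A ⊆ E} q^{k_G(A)} ∏_{e ∈ A} v_e` along contractions, where the partition
function of the contraction `G/F` is `∑_{A ⊆ E∖F} q^{k_G(A ∪ F)} ∏_{e ∈ A} u_e`. -/
theorem potts_expansion_contractions {V E K : Type*} [Fintype V] [Fintype E] [DecidableEq E]
    [CommRing K] (ε : E → Sym2 V) (q : K) (v u : E → K) :
    (∑ A ∈ Finset.univ.powerset, q ^ multigraphComponents ε A * ∏ e ∈ A, v e) =
      ∑ F ∈ Finset.univ.powerset, (∏ e ∈ F, (v e - u e)) *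
        ∑ A ∈ (Finset.univ \ F).powerset,
          q ^ multigraphComponents ε (A ∪ F) * ∏ e ∈ A, u e := by
  have h : ∀ B : Finset E, (∏ e ∈ B, v e) =
      ∑ F ∈ B.powerset, (∏ e ∈ F, (v e - u e)) * ∏ e ∈ B \ F, u e := by
    intro B
    have := Finset.prod_add (fun e => v e - u e) u B
    simpa [sub_add_cancel] using this
  simp_rw [h, Finset.mul_sum, Finset.sum_sigma']
  refine Finset.sum_nbij' (fun p => ⟨p.2, p.1 \ p.2⟩) (fun p => ⟨p.2 ∪ p.1, p.1⟩)
    ?_ ?_ ?_ ?_ ?_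
  · rintro ⟨B, F⟩ hp
    simp only [Finset.mem_sigma, Finset.mem_powerset] at hp ⊢
    exact ⟨Finset.subset_univ _, fun x hx => by
      simp only [Finset.mem_sdiff] at hx ⊢
      exact ⟨Finset.mem_univ _, hx.2⟩⟩
  · rintro ⟨F, A⟩ hp
    simp only [Finset.mem_sigma, Finset.mem_powerset] at hp ⊢
    exact ⟨Finset.subset_univ _, Finset.subset_union_right⟩
  · rintro ⟨B, F⟩ hp
    simp only [Finset.mem_sigma, Finset.mem_powerset] at hp
    have : B \ F ∪ F = B := Finset.sdiff_union_of_subset hp.2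
    simp [this]
  · rintro ⟨F, A⟩ hp
    simp only [Finset.mem_sigma, Finset.mem_powerset] at hp
    have hd : Disjoint A F := fun s hsA hsF => by
      intro x hx
      have := hp.2 (hsA hx)
      simp only [Finset.mem_sdiff] at this
      exact absurd (hsF hx) this.2
    have : (A ∪ F) \ F = A := by
      rw [Finset.union_sdiff_right, Finset.sdiff_eq_self_of_disjoint hd]
    simp [this]
  · rintro ⟨B, F⟩ hp
    simp only [Finset.mem_sigma, Finset.mem_powerset] at hp
    have : B \ F ∪ F = B := Finset.sdiff_union_of_subset hp.2
    rw [this]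
    ring
end

section
/- Biggs formula for matroids: Let M be a matroid on a finite ground set E with rank function r_M, K a field, q a nonzero element of K, and let v = (v_e)_{e∈E} and u = (u_e)_{e∈E} be families of nonzero elements of K. Then Z̃(M; q, v) = (∏_{e∈E} v_e/u_e) · ∑_{F ⊆ E} (∏_{e∈F} (u_e/v_e − 1)) · Z̃(M − F; q, (u_e)_{e∈E∖F}). -/
open Finset

/-- **Biggs formula for matroids** : expansion of the normalized Potts model partition
function `Z̃(M;q,v) = ∑_{A ⊆ E} q^{-r_M(A)} ∏_{e ∈ A} v_e` of a matroid along deletions.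
The matroid `M` on the finite ground set `E` is given by its rank function `r`,
satisfying the rank axioms (Oxley, Theorem 1.3.2): `r A ≤ |A|`, monotonicity and
submodularity.  The deletion `M − F` has rank function `r_{M−F}(A) = r_M(A)` for
`A ⊆ E ∖ F`. -/
theorem matroid_biggs_formula {E K : Type*} [Fintype E] [DecidableEq E] [Field K]
    (r : Finset E → ℕ)
    (hr_card : ∀ A, r A ≤ A.card)
    (hr_mono : ∀ A B, A ⊆ B → r A ≤ r B)
    (hr_submod : ∀ A B, r (A ∪ B) + r (A ∩ B) ≤ r A + r B)
    (q : K) (hq : q ≠ 0) (v u : E → K) (hv : ∀ e, v e ≠ 0) (hu : ∀ e, u e ≠ 0) :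
    (∑ A ∈ Finset.univ.powerset, q ^ (-(r A : ℤ)) * ∏ e ∈ A, v e) =
      (∏ e : E, v e / u e) *
        ∑ F ∈ Finset.univ.powerset, (∏ e ∈ F, (u e / v e - 1)) *
          ∑ A ∈ (Finset.univ \ F).powerset, q ^ (-(r A : ℤ)) * ∏ e ∈ A, u e := by
  have hbin : ∀ s : Finset E,
      (∑ F ∈ s.powerset, ∏ e ∈ F, (u e / v e - 1)) = ∏ e ∈ s, (u e / v e) := by
    intro s
    have h := Finset.prod_add (fun e => u e / v e - 1) (fun _ => (1 : K)) s
    simp only [Finset.prod_const_one, mul_one, sub_add_cancel] at h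
    exact h.symm
  have hsum : (∑ F ∈ Finset.univ.powerset, (∏ e ∈ F, (u e / v e - 1)) *
      ∑ A ∈ (Finset.univ \ F).powerset, q ^ (-(r A : ℤ)) * ∏ e ∈ A, u e)
    = ∑ A ∈ Finset.univ.powerset,
        (∏ e ∈ (Finset.univ \ A), (u e / v e)) * (q ^ (-(r A : ℤ)) * ∏ e ∈ A, u e) := by
    calc (∑ F ∈ Finset.univ.powerset, (∏ e ∈ F, (u e / v e - 1)) *
          ∑ A ∈ (Finset.univ \ F).powerset, q ^ (-(r A : ℤ)) * ∏ e ∈ A, u e)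
        = ∑ F ∈ Finset.univ.powerset, ∑ A ∈ (Finset.univ \ F).powerset,
            (∏ e ∈ F, (u e / v e - 1)) * (q ^ (-(r A : ℤ)) * ∏ e ∈ A, u e) := by
          simp [Finset.mul_sum]
      _ = ∑ A ∈ Finset.univ.powerset, ∑ F ∈ (Finset.univ \ A).powerset,
            (∏ e ∈ F, (u e / v e - 1)) * (q ^ (-(r A : ℤ)) * ∏ e ∈ A, u e) := by
          apply Finset.sum_comm'
          intro F A
          simp [Finset.subset_sdiff, disjoint_comm]
      _ = _ := by
          refine Finset.sum_congr rfl fun A _ => ?_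
          rw [← Finset.sum_mul, hbin]
  rw [hsum, Finset.mul_sum]
  refine Finset.sum_congr rfl fun A _ => ?_
  have hvu : (∏ e : E, v e / u e)
      = (∏ e ∈ A, v e / u e) * ∏ e ∈ Finset.univ \ A, v e / u e := by
    rw [← Finset.prod_sdiff (Finset.subset_univ A), mul_comm]
  rw [hvu]
  have h1 : (∏ e ∈ Finset.univ \ A, v e / u e) * (∏ e ∈ Finset.univ \ A, u e / v e) = 1 := by
    rw [← Finset.prod_mul_distrib]
    refine Finset.prod_eq_one fun e _ => ?_
    field_simp
    rw [mul_comm]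
    exact div_self (mul_ne_zero (hu e) (hv e))
  have h2 : (∏ e ∈ A, v e / u e) * (∏ e ∈ A, u e) = ∏ e ∈ A, v e := by
    rw [← Finset.prod_mul_distrib]
    refine Finset.prod_congr rfl fun e _ => ?_
    field_simp
    exact mul_div_cancel_right₀ (v e) (hu e)
  calc q ^ (-(r A : ℤ)) * ∏ e ∈ A, v e
      = q ^ (-(r A : ℤ)) * ((∏ e ∈ A, v e / u e) * (∏ e ∈ A, u e)) := by rw [h2]
    _ = ((∏ e ∈ A, v e / u e) * ((∏ e ∈ Finset.univ \ A, v e / u e) *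
          (∏ e ∈ Finset.univ \ A, u e / v e))) *
          (q ^ (-(r A : ℤ)) * ∏ e ∈ A, u e) := by rw [h1]; ring
    _ = _ := by ring
end

section
/- Behavior of the normalized Potts model partition function under matroid duality: Let M be a matroid on a finite ground set E with rank function r_M, K a field, q a nonzero element of K, and v = (v_e)_{e∈E} a family of nonzero elements of K. Then Z̃(M*; q, v) = q^{r_M(E) − |E|} · (∏_{e∈E} v_e) · Z̃(M; q, (q/v_e)_{e∈E}), where M* is the dual matroid of M. -/
open Finset

/-- Behavior of the normalized Potts model partition function
`Z̃(M;q,v) = ∑_{A ⊆ E} q^{-r_M(A)} ∏_{e ∈ A} v_e` under matroid duality: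
`Z̃(M*;q,v) = q^{r_M(E) - |E|} (∏_{e∈E} v_e) Z̃(M;q,q/v)`, where the dual matroid `M*`
has rank function `r_{M*}(A) = |A| - r_M(E) + r_M(E∖A)`.  The matroid `M` on the finite
ground set `E` is given by its rank function `r`, satisfying the rank axioms
(Oxley, Theorem 1.3.2): `r A ≤ |A|`, monotonicity and submodularity. -/
theorem matroid_potts_duality {E K : Type*} [Fintype E] [DecidableEq E] [Field K]
    (r : Finset E → ℕ)
    (hr_card : ∀ A, r A ≤ A.card)
    (hr_mono : ∀ A B, A ⊆ B → r A ≤ r B)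
    (hr_submod : ∀ A B, r (A ∪ B) + r (A ∩ B) ≤ r A + r B)
    (q : K) (hq : q ≠ 0) (v : E → K) (hv : ∀ e, v e ≠ 0) :
    (∑ A ∈ Finset.univ.powerset,
        q ^ (-((A.card : ℤ) - (r Finset.univ : ℤ) + (r (Finset.univ \ A) : ℤ))) *
          ∏ e ∈ A, v e) =
      q ^ ((r Finset.univ : ℤ) - (Fintype.card E : ℤ)) * (∏ e : E, v e) *
        ∑ A ∈ Finset.univ.powerset, q ^ (-(r A : ℤ)) * ∏ e ∈ A, q / v e := by
  rw [Finset.powerset_univ, Finset.mul_sum]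
  refine Fintype.sum_bijective _ (Function.Involutive.bijective compl_involutive) _ _ ?_
  intro A
  rw [← Finset.compl_eq_univ_sdiff]
  have h1 : ∏ e ∈ Aᶜ, (q / v e) = q ^ ((Aᶜ.card : ℤ)) / ∏ e ∈ Aᶜ, v e := by
    rw [Finset.prod_div_distrib, Finset.prod_const, zpow_natCast]
  have h2 : (∏ e : E, v e) = (∏ e ∈ A, v e) * ∏ e ∈ Aᶜ, v e :=
    (Finset.prod_mul_prod_compl A v).symm
  have hvA : (∏ e ∈ Aᶜ, v e) ≠ 0 := Finset.prod_ne_zero_iff.2 fun e _ => hv e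
  have hcard : ((Aᶜ.card : ℤ)) = (Fintype.card E : ℤ) - A.card := by
    rw [Finset.card_compl, Nat.cast_sub (Finset.card_le_univ A)]
  have key : q ^ (-((A.card : ℤ) - (r Finset.univ : ℤ) + (r Aᶜ : ℤ)))
      = q ^ ((r Finset.univ : ℤ) - (Fintype.card E : ℤ)) * q ^ (-(r Aᶜ : ℤ))
        * q ^ ((Fintype.card E : ℤ) - A.card) := by
    rw [← zpow_add₀ hq, ← zpow_add₀ hq]
    ring_nf
  rw [h1, h2, hcard, key]
  field_simp
end

section
/- Expansion of the normalized Potts model partition function of a matroid along contractions: Let M be a matroid on a finite ground set E with rank function r_M, K a field, q a nonzero element of K, and let v = (v_e)_{e∈E} and u = (u_e)_{e∈E} be families in K. Then Z̃(M; q, v) = ∑_{F ⊆ E} q^{−r_M(F)} · (∏_{e∈F} (v_e − u_e)) · Z̃(M/F; q, (u_e)_{e∈E∖F}). -/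
open Finset

/-- Expansion of the normalized Potts model partition function
`Z̃(M;q,v) = ∑_{A ⊆ E} q^{-r_M(A)} ∏_{e ∈ A} v_e` of a matroid along contractions.
The matroid `M` on the finite ground set `E` is given by its rank function `r`,
satisfying the rank axioms (Oxley, Theorem 1.3.2): `r A ≤ |A|`, monotonicity and
submodularity.  The contraction `M/F` has rank function
`r_{M/F}(A) = r_M(A ∪ F) - r_M(F)` for `A ⊆ E ∖ F`. -/
theorem matroid_potts_expansion_contractions {E K : Type*} [Fintype E] [DecidableEq E]
    [Field K] (r : Finset E → ℕ)
    (hr_card : ∀ A, r A ≤ A.card)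
    (hr_mono : ∀ A B, A ⊆ B → r A ≤ r B)
    (hr_submod : ∀ A B, r (A ∪ B) + r (A ∩ B) ≤ r A + r B)
    (q : K) (hq : q ≠ 0) (v u : E → K) :
    (∑ A ∈ Finset.univ.powerset, q ^ (-(r A : ℤ)) * ∏ e ∈ A, v e) =
      ∑ F ∈ Finset.univ.powerset, q ^ (-(r F : ℤ)) * (∏ e ∈ F, (v e - u e)) *
        ∑ A ∈ (Finset.univ \ F).powerset,
          q ^ (-((r (A ∪ F) : ℤ) - (r F : ℤ))) * ∏ e ∈ A, u e := by
  have step1 : (∑ F ∈ Finset.univ.powerset,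
        q ^ (-(r F : ℤ)) * (∏ e ∈ F, (v e - u e)) *
        ∑ A ∈ (Finset.univ \ F).powerset,
          q ^ (-((r (A ∪ F) : ℤ) - (r F : ℤ))) * ∏ e ∈ A, u e) =
      ∑ F ∈ Finset.univ.powerset, ∑ A ∈ (Finset.univ \ F).powerset,
        q ^ (-(r (A ∪ F) : ℤ)) * ((∏ e ∈ F, (v e - u e)) * ∏ e ∈ A, u e) := by
    refine Finset.sum_congr rfl fun F _ => ?_
    rw [Finset.mul_sum]
    refine Finset.sum_congr rfl fun A _ => ?_
    rw [show (-(r (A ∪ F) : ℤ)) = (-(r F : ℤ)) + (-((r (A ∪ F) : ℤ) - (r F : ℤ))) by ring,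
      zpow_add₀ hq]
    ring
  have step2 : (∑ F ∈ Finset.univ.powerset, ∑ A ∈ (Finset.univ \ F).powerset,
        q ^ (-(r (A ∪ F) : ℤ)) * ((∏ e ∈ F, (v e - u e)) * ∏ e ∈ A, u e)) =
      ∑ S ∈ Finset.univ.powerset, ∑ F ∈ S.powerset,
        q ^ (-(r S : ℤ)) * ((∏ e ∈ F, (v e - u e)) * ∏ e ∈ S \ F, u e) := by
    rw [Finset.sum_sigma', Finset.sum_sigma']
    refine Finset.sum_nbij' (fun x => ⟨x.2 ∪ x.1, x.1⟩) (fun x => ⟨x.2, x.1 \ x.2⟩)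
      ?_ ?_ ?_ ?_ ?_
    · rintro ⟨F, A⟩ hx
      simp only [Finset.mem_sigma, Finset.mem_powerset] at hx ⊢
      exact ⟨Finset.subset_univ _, Finset.subset_union_right⟩
    · rintro ⟨S, F⟩ hx
      simp only [Finset.mem_sigma, Finset.mem_powerset] at hx ⊢
      exact ⟨Finset.subset_univ _, fun e he => by
        simp only [Finset.mem_sdiff, Finset.mem_univ, true_and]
        exact (Finset.mem_sdiff.mp he).2⟩
    · rintro ⟨F, A⟩ hx
      simp only [Finset.mem_sigma, Finset.mem_powerset] at hx
      have hdisj : Disjoint A F := Finset.disjoint_left.mpr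
        fun e he => (Finset.mem_sdiff.mp (hx.2 he)).2
      simp [Finset.union_sdiff_cancel_right hdisj]
    · rintro ⟨S, F⟩ hx
      simp only [Finset.mem_sigma, Finset.mem_powerset] at hx
      simp [Finset.sdiff_union_of_subset hx.2]
    · rintro ⟨F, A⟩ hx
      simp only [Finset.mem_sigma, Finset.mem_powerset] at hx
      have hdisj : Disjoint A F := Finset.disjoint_left.mpr
        fun e he => (Finset.mem_sdiff.mp (hx.2 he)).2
      simp [Finset.union_sdiff_cancel_right hdisj]
  have step3 : (∑ S ∈ Finset.univ.powerset, ∑ F ∈ S.powerset,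
        q ^ (-(r S : ℤ)) * ((∏ e ∈ F, (v e - u e)) * ∏ e ∈ S \ F, u e)) =
      ∑ S ∈ Finset.univ.powerset, q ^ (-(r S : ℤ)) * ∏ e ∈ S, v e := by
    refine Finset.sum_congr rfl fun S _ => ?_
    rw [← Finset.mul_sum, ← Finset.prod_add]
    simp [sub_add_cancel]
  rw [step1, step2, step3]
end

section
/- Expansion of the chromatic polynomial as a weighted sum of flow polynomials of deletions: Let G = (V, E, ε) be a finite multigraph with an orientation (s, t), let q be a positive integer, and let H be any finite abelian group of cardinality q. Then, as an identity in ℚ, χ(G; q) = (−1)^{|E|} · q^{|V| − |E|} · ∑_{F ⊆ E} (1 − q)^{|F|} · χ*(G − F; q), where χ(G; q) is the number of proper q-colorings of G and χ*(G − F; q) is the number of nowhere-zero H-flows of the deletion G − F. -/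
open Finset

/-- The number of proper `q`-colorings of the multigraph given by `ε : E → Sym2 V`. -/
noncomputable def properColoringCount {V E : Type*} (ε : E → Sym2 V) (q : ℕ) : ℕ :=
  Nat.card {ω : V → Fin q // ∀ e : E, ∀ x y : V, ε e = s(x, y) → ω x ≠ ω y}

/-- The number of nowhere-zero `H`-flows of the multigraph with edge set `S` and
orientation given by source and target maps `s t : E → V`. -/
noncomputable def nzFlowCount {V E : Type*} [Fintype V] [Fintype E] [DecidableEq V]
    (s t : E → V) (S : Finset E) (H : Type*) [AddCommGroup H] [Fintype H] : ℕ :=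
  Nat.card {φ : {e : E // e ∈ S} → H //
    (∀ x : V, (∑ e : {e : E // e ∈ S}, if s e.1 = x then φ e else 0) =
              (∑ e : {e : E // e ∈ S}, if t e.1 = x then φ e else 0)) ∧
    ∀ e, φ e ≠ 0}

/-!
Expanding `∏ₑ (1 - [ω (s e) = ω (t e)])` gives `χ(G; q) = ∑_A (-1)^|A| q^c(A)`, where `c(A)` is
the number of components of `(V, A)`. For the subgraph `(V, A)` the boundary map `H^A → H^V` has
the `H`-flows as kernel, and its image is the kernel of the surjective map `H^V → H^{components}`
summing over each component; counting gives `q^c(A) q^|A| = q^|V| · #flows(A)`. Every flow on `A`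
is a nowhere-zero flow on its support `B ⊆ A`, so `#flows(A) = ∑_{B ⊆ A} χ*(B)`, and the identity
`∑_{A : B ⊆ A ⊆ E} x^|A| y^|E \ A| = x^|B| (x + y)^|E \ B|` at `x = -1`, `y = q` rearranges the
double sum into the stated form.
-/

namespace Multigraph

section Pushforward

variable (H : Type*) [AddCommGroup H] {X Y Z : Type*} [Fintype X] [DecidableEq Y]

def pushforward (π : X → Y) : (X → H) →+ (Y → H) :=
  ∑ x, (AddMonoidHom.single _ (π x)).comp (Pi.evalAddMonoidHom _ x)

theorem pushforward_apply (π : X → Y) (ψ : X → H) :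
    pushforward H π ψ = ∑ x, Pi.single (π x) (ψ x) := by
  simp [pushforward]

theorem pushforward_apply_apply (π : X → Y) (ψ : X → H) (y : Y) :
    pushforward H π ψ y = ∑ x, if π x = y then ψ x else 0 := by
  simp [pushforward_apply, Finset.sum_apply, Pi.single_apply, eq_comm]

theorem pushforward_single [DecidableEq X] (π : X → Y) (x : X) (h : H) :
    pushforward H π (Pi.single x h) = Pi.single (π x) h := by
  rw [pushforward_apply, Fintype.sum_eq_single x fun y hy => by
    rw [Pi.single_eq_of_ne hy, Pi.single_zero], Pi.single_eq_same]

theorem pushforward_comp [Fintype Y] [DecidableEq Z] (π : X → Y) (ρ : Y → Z) :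
    pushforward H (ρ ∘ π) = (pushforward H ρ).comp (pushforward H π) := by
  classical
  ext x h : 2
  simp [pushforward_single]

theorem pushforward_surjective [Fintype Y] {π : X → Y} (hπ : Function.Surjective π) :
    Function.Surjective (pushforward H π) := by
  classical
  intro g
  refine ⟨∑ y, Pi.single (Function.surjInv hπ y) (g y), ?_⟩
  simp [pushforward_single, Function.surjInv_eq, univ_sum_single]

theorem pushforward_restrict (A : Finset X) (π : X → Y) {φ : X → H}
    (hφ : ∀ x ∉ A, φ x = 0) :
    pushforward H (fun x : A => π x) (fun x => φ x) = pushforward H π φ := by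
  rw [pushforward_apply, pushforward_apply]
  exact (sum_coe_sort A fun x => (Pi.single (π x) (φ x) : Y → H)).trans <|
    sum_subset (subset_univ A) fun x _ hx => by rw [hφ x hx, Pi.single_zero]

end Pushforward

section Boundary

variable {V E : Type*} (s t : E → V)

def Linked (x y : V) : Prop := ∃ e, s e = x ∧ t e = y

-- `Quot` identifies along the equivalence closure of `Linked`: these are the connected components.
abbrev Components := Quot (Linked s t)

def constantAlongEdgesEquiv (α : Type*) :
    {ω : V → α // ∀ e, ω (s e) = ω (t e)} ≃ (Components s t → α) where
  toFun ω := Quot.lift ω.1 (by rintro x y ⟨e, rfl, rfl⟩; exact ω.2 e)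
  invFun g := ⟨g ∘ Quot.mk _, fun e => congrArg g (Quot.sound ⟨e, rfl, rfl⟩)⟩
  left_inv _ := rfl
  right_inv g := by ext ⟨x⟩; rfl

theorem card_constantAlongEdges [Finite V] (α : Type*) :
    Nat.card {ω : V → α // ∀ e, ω (s e) = ω (t e)} = Nat.card α ^ Nat.card (Components s t) := by
  rw [Nat.card_congr (constantAlongEdgesEquiv s t α), Nat.card_fun]

variable [Fintype E] [DecidableEq V] (H : Type*) [AddCommGroup H]

def boundary : (E → H) →+ (V → H) := pushforward H s - pushforward H t

theorem boundary_single [DecidableEq E] (e : E) (h : H) :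
    boundary s t H (Pi.single e h) = Pi.single (s e) h - Pi.single (t e) h := by
  simp [boundary, pushforward_single]

theorem boundary_eq_zero_iff (φ : E → H) :
    boundary s t H φ = 0 ↔
      ∀ x, (∑ e, if s e = x then φ e else 0) = ∑ e, if t e = x then φ e else 0 := by
  simp [boundary, sub_eq_zero, funext_iff, pushforward_apply_apply]

theorem single_sub_single_mem_range_boundary {x y : V} (hxy : Relation.EqvGen (Linked s t) x y)
    (h : H) : Pi.single x h - Pi.single y h ∈ (boundary s t H).range := by
  classical
  induction hxy with
  | rel x y hxy =>
    obtain ⟨e, rfl, rfl⟩ := hxy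
    exact ⟨Pi.single e h, boundary_single s t H e h⟩
  | refl x => simp
  | symm x y _ ih => simpa using neg_mem ih
  | trans x y z _ _ ih₁ ih₂ => simpa using add_mem ih₁ ih₂

variable [Fintype V]

theorem ker_pushforward_mk_eq_range_boundary [Fintype (Components s t)]
    [DecidableEq (Components s t)] :
    (pushforward H (Quot.mk (Linked s t))).ker = (boundary s t H).range := by
  refine le_antisymm (fun ψ hψ => ?_) ?_
  · -- Moving each value of `ψ` to the representative of its component kills `ψ`; the
    -- difference is a sum of `single x h - single x' h` with `x`, `x'` in one component.
    have hrep : pushforward H (fun x => (Quot.mk (Linked s t) x).out) ψ = 0 := by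
      rw [show (fun x => (Quot.mk (Linked s t) x).out) = Quot.out ∘ Quot.mk (Linked s t) from rfl,
        pushforward_comp, AddMonoidHom.comp_apply, hψ, map_zero]
    rw [pushforward_apply] at hrep
    have hψ : ψ = ∑ x, (Pi.single x (ψ x) - Pi.single (Quot.mk (Linked s t) x).out (ψ x)) := by
      rw [sum_sub_distrib, hrep, sub_zero, univ_sum_single]
    rw [hψ]
    exact sum_mem fun x _ => single_sub_single_mem_range_boundary s t H
      (Quot.eqvGen_exact (Quot.out_eq _).symm) (ψ x)
  · rintro _ ⟨φ, rfl⟩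
    have hst : Quot.mk (Linked s t) ∘ s = Quot.mk (Linked s t) ∘ t :=
      funext fun e => Quot.sound ⟨e, rfl, rfl⟩
    rw [AddMonoidHom.mem_ker, boundary, AddMonoidHom.sub_apply, map_sub,
      ← AddMonoidHom.comp_apply, ← AddMonoidHom.comp_apply,
      ← pushforward_comp, ← pushforward_comp, hst, sub_self]

theorem card_ker_boundary_mul [Finite H] :
    Nat.card (boundary s t H).ker * Nat.card H ^ Fintype.card V =
      Nat.card H ^ Fintype.card E * Nat.card H ^ Nat.card (Components s t) := by
  classical
  have := Fintype.ofFinite (Components s t)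
  have hE := (boundary s t H).ker.card_mul_index
  have hV := (pushforward H (Quot.mk (Linked s t))).ker.card_mul_index
  rw [AddSubgroup.index_ker] at hE hV
  rw [AddMonoidHom.range_eq_top.mpr (pushforward_surjective H Quot.mk_surjective),
    AddSubgroup.card_top, ker_pushforward_mk_eq_range_boundary] at hV
  simp only [Nat.card_fun, Nat.card_eq_fintype_card] at hE hV ⊢
  rw [← hE, ← hV, mul_assoc]

theorem card_constantAlongEdges_mul [Finite H] (α : Type*) (hα : Nat.card α = Nat.card H) :
    Nat.card {ω : V → α // ∀ e, ω (s e) = ω (t e)} * Nat.card H ^ Fintype.card E =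
      Nat.card H ^ Fintype.card V * Nat.card {φ : E → H // boundary s t H φ = 0} := by
  have := card_ker_boundary_mul s t H
  rw [card_constantAlongEdges, hα]
  change _ = _ * Nat.card (boundary s t H).ker
  linarith

end Boundary

section EdgeSubsets

variable {V E H : Type*} (A : Finset E)

def supportedEquiv [DecidableEq E] [Zero H] : {φ : E → H // ∀ e ∉ A, φ e = 0} ≃ (A → H) where
  toFun φ e := φ.1 e
  invFun ψ := ⟨fun e => if h : e ∈ A then ψ ⟨e, h⟩ else 0, fun _ he => dif_neg he⟩
  left_inv φ := Subtype.ext <| funext fun e => by by_cases h : e ∈ A <;> simp [h, φ.2 e]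
  right_inv ψ := funext fun e => dif_pos e.2

theorem card_subtype_supported [DecidableEq E] [Zero H] (Q : (A → H) → Prop) :
    Nat.card {ψ : A → H // Q ψ} = Nat.card {φ : E → H // (∀ e ∉ A, φ e = 0) ∧ Q fun e => φ e} :=
  Nat.card_congr <| (Equiv.subtypeEquiv (supportedEquiv A).symm fun ψ =>
    Iff.of_eq (congrArg Q ((supportedEquiv A).apply_symm_apply ψ).symm)).trans
    (Equiv.subtypeSubtypeEquivSubtypeInter _ fun φ : E → H => Q fun e => φ e)

theorem card_supported_eq_sum [Fintype E] [Zero H] [Finite H] (P : (E → H) → Prop) :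
    Nat.card {φ : E → H // (∀ e ∉ A, φ e = 0) ∧ P φ} =
      ∑ B ∈ A.powerset, Nat.card {φ : E → H // (∀ e ∉ B, φ e = 0) ∧ P φ ∧ ∀ e ∈ B, φ e ≠ 0} := by
  classical
  have := Fintype.ofFinite H
  simp only [Nat.card_eq_fintype_card, Fintype.card_subtype]
  rw [card_eq_sum_card_fiberwise (f := fun φ : E → H => ({e | φ e ≠ 0} : Finset E))
    (t := A.powerset) fun φ hφ => by
      simp only [coe_filter, mem_univ, true_and, Set.mem_ofPred_eq] at hφ
      exact mem_powerset.mpr fun e he => by_contra fun hA => (mem_filter.mp he).2 (hφ.1 e hA)]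
  refine sum_congr rfl fun B hB => congrArg card ?_
  rw [mem_powerset] at hB
  ext φ
  simp only [mem_filter, mem_univ, true_and, Finset.ext_iff]
  grind

variable [Fintype E] [DecidableEq E] [DecidableEq V] (s t : E → V) [AddCommGroup H]

theorem card_flows_subgraph :
    Nat.card {ψ : A → H // boundary (fun e : A => s e) (fun e : A => t e) H ψ = 0} =
      Nat.card {φ : E → H // (∀ e ∉ A, φ e = 0) ∧ boundary s t H φ = 0} := by
  rw [card_subtype_supported]
  exact Nat.card_congr <| Equiv.subtypeEquivRight fun φ => and_congr_right fun hφ => by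
    simp only [boundary, AddMonoidHom.sub_apply, pushforward_restrict H A _ hφ]

theorem nzFlowCount_eq_card [Fintype V] [Fintype H] :
    nzFlowCount s t A H =
      Nat.card {φ : E → H // (∀ e ∉ A, φ e = 0) ∧ boundary s t H φ = 0 ∧ ∀ e ∈ A, φ e ≠ 0} := by
  simp_rw [nzFlowCount, ← boundary_eq_zero_iff, card_subtype_supported]
  exact Nat.card_congr <| Equiv.subtypeEquivRight fun φ => and_congr_right fun hφ => by
    simp only [boundary, AddMonoidHom.sub_apply, pushforward_restrict H A _ hφ, Subtype.forall]

theorem card_flows_subgraph_eq_sum [Fintype V] [Fintype H] :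
    Nat.card {ψ : A → H // boundary (fun e : A => s e) (fun e : A => t e) H ψ = 0} =
      ∑ B ∈ A.powerset, nzFlowCount s t B H := by
  rw [card_flows_subgraph, card_supported_eq_sum]
  simp_rw [nzFlowCount_eq_card]

theorem card_constantAlongEdges_subset_mul [Fintype V] [Fintype H] {q : ℕ} (hH : Nat.card H = q) :
    Nat.card {ω : V → Fin q // ∀ e ∈ A, ω (s e) = ω (t e)} * q ^ #A =
      q ^ Fintype.card V * ∑ B ∈ A.powerset, nzFlowCount s t B H := by
  have h := card_constantAlongEdges_mul (fun e : A => s e) (fun e : A => t e) H (Fin q)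
    (by rw [Nat.card_eq_fintype_card, Fintype.card_fin, hH])
  rw [hH, Fintype.card_coe, card_flows_subgraph_eq_sum] at h
  simpa only [Subtype.forall] using h

end EdgeSubsets

theorem properColoringCount_eq_card {V E : Type*} (ε : E → Sym2 V) (s t : E → V)
    (hst : ∀ e, ε e = s(s e, t e)) (q : ℕ) :
    properColoringCount ε q = Nat.card {ω : V → Fin q // ∀ e, ω (s e) ≠ ω (t e)} := by
  refine Nat.card_congr <| Equiv.subtypeEquivRight fun ω =>
    ⟨fun h e => h e _ _ (hst e), fun h e x y hxy => ?_⟩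
  rcases Sym2.eq_iff.mp ((hst e).symm.trans hxy) with ⟨rfl, rfl⟩ | ⟨rfl, rfl⟩
  exacts [h e, (h e).symm]

theorem card_properColorings_eq_sum {V E α : Type*} [Fintype V] [Fintype E] [DecidableEq E]
    [Fintype α] [DecidableEq α] (s t : E → V) :
    (Nat.card {ω : V → α // ∀ e, ω (s e) ≠ ω (t e)} : ℤ) =
      ∑ A ∈ univ.powerset, (-1 : ℤ) ^ #A * Nat.card {ω : V → α // ∀ e ∈ A, ω (s e) = ω (t e)} := by
  classical
  have h := inclusion_exclusion_card_inf_compl (univ : Finset E)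
    fun e => ({ω : V → α | ω (s e) = ω (t e)} : Finset _)
  simp only [Nat.card_eq_fintype_card, Fintype.card_subtype]
  convert h using 4 with A
  · ext ω; simp [mem_inf]
  · congr 1; ext ω; simp [mem_inf]

theorem pow_card_mul_properColoringCount {V E : Type*} [Fintype V] [Fintype E] [DecidableEq V]
    [DecidableEq E] (ε : E → Sym2 V) (s t : E → V) (hst : ∀ e, ε e = s(s e, t e)) {q : ℕ}
    (H : Type*) [AddCommGroup H] [Fintype H] (hH : Nat.card H = q) :
    (q : ℚ) ^ Fintype.card E * properColoringCount ε q = q ^ Fintype.card V *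
      ∑ A ∈ univ.powerset, (-1) ^ #A * (q : ℚ) ^ #(univ \ A) *
        ∑ B ∈ A.powerset, (nzFlowCount s t B H : ℚ) := by
  have hIE : (properColoringCount ε q : ℚ) = ∑ A ∈ univ.powerset,
      (-1) ^ #A * (Nat.card {ω : V → Fin q // ∀ e ∈ A, ω (s e) = ω (t e)} : ℚ) := by
    exact_mod_cast properColoringCount_eq_card ε s t hst q ▸ card_properColorings_eq_sum s t
  rw [hIE, mul_sum, mul_sum]
  refine sum_congr rfl fun A _ => ?_
  have hA : (Nat.card {ω : V → Fin q // ∀ e ∈ A, ω (s e) = ω (t e)} : ℚ) * q ^ #A =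
      q ^ Fintype.card V * ∑ B ∈ A.powerset, (nzFlowCount s t B H : ℚ) := by
    exact_mod_cast card_constantAlongEdges_subset_mul A s t hH
  rw [← card_univ, ← card_sdiff_add_card_eq_card (subset_univ A), pow_add]
  linear_combination (-1) ^ #A * (q : ℚ) ^ #(univ \ A) * hA

end Multigraph

section BinomialTransform

variable {ι R : Type*} [DecidableEq ι] [CommSemiring R] (x y : R)

theorem Finset.sum_Icc_pow_mul_pow {B S : Finset ι} (hB : B ⊆ S) :
    ∑ A ∈ Icc B S, x ^ #A * y ^ #(S \ A) = x ^ #B * (x + y) ^ #(S \ B) := by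
  rw [Icc_eq_image_powerset hB, sum_image fun C hC D hD hCD => by
    have hC' := disjoint_of_subset_right (mem_powerset.mp hC) disjoint_sdiff
    have hD' := disjoint_of_subset_right (mem_powerset.mp hD) disjoint_sdiff
    rw [← union_sdiff_cancel_left hC', ← union_sdiff_cancel_left hD']
    exact congrArg (· \ B) hCD]
  rw [← sum_pow_mul_eq_add_pow, mul_sum]
  refine sum_congr rfl fun C hC => ?_
  rw [mem_powerset] at hC
  rw [card_union_of_disjoint (disjoint_of_subset_right hC disjoint_sdiff), ← sup_eq_union,
    ← sdiff_sdiff_left, card_sdiff_of_subset hC, pow_add, mul_assoc]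

theorem Finset.sum_powerset_mul_sum_powerset (g : Finset ι → R) (S : Finset ι) :
    ∑ A ∈ S.powerset, x ^ #A * y ^ #(S \ A) * ∑ B ∈ A.powerset, g B =
      ∑ F ∈ S.powerset, x ^ #(S \ F) * (x + y) ^ #F * g (S \ F) := by
  calc ∑ A ∈ S.powerset, x ^ #A * y ^ #(S \ A) * ∑ B ∈ A.powerset, g B
      = ∑ B ∈ S.powerset, ∑ A ∈ Icc B S, x ^ #A * y ^ #(S \ A) * g B := by
        simp_rw [mul_sum]
        exact sum_comm' fun A B => by
          simp only [mem_powerset, mem_Icc]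
          exact ⟨fun h => ⟨⟨h.2, h.1⟩, h.2.trans h.1⟩, fun h => ⟨h.1.2, h.1.1⟩⟩
    _ = ∑ B ∈ S.powerset, x ^ #B * (x + y) ^ #(S \ B) * g B := by
        refine sum_congr rfl fun B hB => ?_
        rw [← sum_mul, sum_Icc_pow_mul_pow x y (mem_powerset.mp hB)]
    _ = ∑ F ∈ S.powerset, x ^ #(S \ F) * (x + y) ^ #F * g (S \ F) := by
        refine sum_nbij' (S \ ·) (S \ ·) (fun _ _ => mem_powerset.mpr sdiff_subset)
          (fun _ _ => mem_powerset.mpr sdiff_subset)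
          (fun B hB => sdiff_sdiff_eq_self (mem_powerset.mp hB))
          (fun F hF => sdiff_sdiff_eq_self (mem_powerset.mp hF)) fun B hB => ?_
        simp only [sdiff_sdiff_eq_self (mem_powerset.mp hB)]

end BinomialTransform

theorem chromatic_expansion_flows_general {V E : Type*} [Fintype V] [Fintype E]
    [DecidableEq V] [DecidableEq E]
    (ε : E → Sym2 V) (s t : E → V) (hst : ∀ e, ε e = s(s e, t e))
    (q : ℕ) (H : Type*) [AddCommGroup H] [Fintype H]
    (hH : Fintype.card H = q) :
    (properColoringCount ε q : ℚ) =
      (-1) ^ (Fintype.card E) * (q : ℚ) ^ ((Fintype.card V : ℤ) - (Fintype.card E : ℤ)) *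
        ∑ F ∈ Finset.univ.powerset,
          (1 - (q : ℚ)) ^ F.card * (nzFlowCount s t (Finset.univ \ F) H : ℚ) := by
  have hq : (q : ℚ) ≠ 0 := by rw [← hH]; exact_mod_cast Fintype.card_ne_zero
  have hsign (F : Finset E) (c : ℚ) : (-1) ^ #(univ \ F) * (-1 + q) ^ #F * c =
      (-1) ^ Fintype.card E * ((1 - q) ^ #F * c) := by
    rw [show (-1 + q : ℚ) = -1 * (1 - q) by ring, mul_pow, ← mul_assoc, ← pow_add,
      card_sdiff_add_card_eq_card (subset_univ F), card_univ, mul_assoc]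
  have h := Multigraph.pow_card_mul_properColoringCount ε s t hst H
    (Nat.card_eq_fintype_card.trans hH)
  simp_rw [sum_powerset_mul_sum_powerset, hsign, ← mul_sum] at h
  rw [zpow_sub₀ hq, zpow_natCast, zpow_natCast]
  field_simp
  linear_combination h

/-- The chromatic polynomial as a weighted sum of flow polynomials of deletions:
`χ(G;q) = (-1)^{|E|} q^{|V|-|E|} ∑_{F ⊆ E} (1-q)^{|F|} χ*(G-F;q)`, where `(s,t)` is an
orientation of `G` and `H` is any finite abelian group of cardinality `q`. -/
theorem chromatic_expansion_flows {V E : Type*} [Fintype V] [Fintype E]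
    [DecidableEq V] [DecidableEq E]
    (ε : E → Sym2 V) (s t : E → V) (hst : ∀ e, ε e = s(s e, t e))
    (q : ℕ) (hq : 0 < q) (H : Type*) [AddCommGroup H] [Fintype H]
    (hH : Fintype.card H = q) :
    (properColoringCount ε q : ℚ) =
      (-1) ^ (Fintype.card E) * (q : ℚ) ^ ((Fintype.card V : ℤ) - (Fintype.card E : ℤ)) *
        ∑ F ∈ Finset.univ.powerset,
          (1 - (q : ℚ)) ^ F.card * (nzFlowCount s t (Finset.univ \ F) H : ℚ) :=
  chromatic_expansion_flows_general ε s t hst q H hH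
end

section
/- Expansion of the flow polynomial as a weighted sum of chromatic polynomials of contractions: Let G = (V, E, ε) be a finite multigraph with an orientation (s, t), let q be a positive integer, and let H be any finite abelian group of cardinality q. Then, as an identity in ℚ, χ*(G; q) = (−1)^{|E|} · q^{−|V|} · ∑_{F ⊆ E} (1 − q)^{|F|} · χ(G/F; q), where χ*(G; q) is the number of nowhere-zero H-flows of G and χ(G/F; q) is the number of proper q-colorings of the contraction G/F. -/
open Finset

/-- The number of proper `q`-colorings of the contraction `G/F` of the multigraph given
by `ε : E → Sym2 V`: maps `ω : V → Fin q` constant on each connected component of the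
spanning subgraph `(V, F)` with `ω x ≠ ω y` for every edge `e ∈ E ∖ F` with endpoints
`x, y`. -/
noncomputable def contractionColoringCount {V E : Type*} (ε : E → Sym2 V) (F : Finset E)
    (q : ℕ) : ℕ :=
  Nat.card {ω : V → Fin q //
    (∀ x y : V, (SimpleGraph.fromEdgeSet (ε '' (F : Set E))).Reachable x y → ω x = ω y) ∧
    ∀ e ∉ F, ∀ x y : V, ε e = s(x, y) → ω x ≠ ω y}

/-!
Both sides equal `q ^ (-|V|)` times the sum, over colourings `ω : V → Fin q`, of a product
over the edges in which an edge contributes `q - 1` if `ω` is constant on it and `-1` otherwise;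
on the right, the sign `(-1) ^ |E|` turns the weights `1 - q` and `1` into these.

On the chromatic side, `χ(G/F; q)` counts exactly the colourings whose set of monochromatic
edges is `F`, so `∑_F (1 - q)^|F| χ(G/F; q) = ∑_ω (1 - q)^(number of monochromatic edges)`.

On the flow side, Kirchhoff's law at a vertex is detected by summing over the characters of
`H`. Choosing one character `ω x` per vertex and summing over the nowhere-zero values of each
edge separately, the edge `e` contributes `∑_{h ≠ 0} (ω (s e) - ω (t e)) h`, which is `q - 1`
or `-1` according as `ω (s e) = ω (t e)`. Since `H` has exactly `q` characters, the maps
`V → Ĥ` may then be replaced by colourings `V → Fin q`.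
-/

lemma AddChar.map_sum_eq_prod {A M ι : Type*} [AddCommGroup A] [CommMonoid M]
    (ψ : AddChar A M) (s : Finset ι) (f : ι → A) :
    ψ (∑ i ∈ s, f i) = ∏ i ∈ s, ψ (f i) := by
  have h := map_prod ψ.toMonoidHom (fun i => Multiplicative.ofAdd (f i)) s
  rwa [← ofAdd_sum] at h

section Flows

variable {V ι H M : Type*} [Fintype V] [DecidableEq V] [Fintype ι] [AddCommGroup H]
  [CommMonoid M]

def netOutflow (s t : ι → V) (φ : ι → H) (x : V) : H :=
  (∑ e, if s e = x then φ e else 0) - ∑ e, if t e = x then φ e else 0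

lemma prod_apply_sum_ite_eq (g : ι → V) (ω : V → AddChar H M) (a : ι → H) :
    ∏ x, ω x (∑ e, if g e = x then a e else 0) = ∏ e, ω (g e) (a e) := by
  simp only [AddChar.map_sum_eq_prod, apply_ite (ω _), AddChar.map_zero_eq_one]
  rw [prod_comm]
  simp

lemma prod_sub_apply_eq_prod_apply_netOutflow (s t : ι → V) (ω : V → AddChar H M)
    (φ : ι → H) :
    ∏ e, (ω (s e) - ω (t e)) (φ e) = ∏ x, ω x (netOutflow s t φ x) := by
  have hneg : ∀ x, -(∑ e, if t e = x then φ e else 0) = ∑ e, if t e = x then -φ e else 0 :=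
    fun x => by simp only [← sum_neg_distrib, neg_ite, neg_zero]
  simp only [AddChar.sub_apply, prod_mul_distrib, netOutflow]
  simp only [sub_eq_add_neg, AddChar.map_add_eq_mul, prod_mul_distrib, hneg, prod_apply_sum_ite_eq]

lemma ite_kirchhoff_eq_sum_prod_sub_apply [Fintype H] [DecidableEq H] (s t : ι → V)
    (φ : ι → H) :
    (if ∀ x, (∑ e, if s e = x then φ e else 0) = ∑ e, if t e = x then φ e else 0
      then (Fintype.card H : ℂ) ^ Fintype.card V else 0) =
      ∑ ω : V → AddChar H ℂ, ∏ e, (ω (s e) - ω (t e)) (φ e) := by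
  simp only [prod_sub_apply_eq_prod_apply_netOutflow]
  rw [← Fintype.prod_sum (fun x (ψ : AddChar H ℂ) => ψ (netOutflow s t φ x))]
  simp only [AddChar.sum_apply_eq_ite, netOutflow, sub_eq_zero, Fintype.prod_ite_zero,
    prod_const, card_univ]

end Flows

theorem card_pow_mul_nzFlowCount {V E : Type*} [Fintype V] [Fintype E] [DecidableEq V]
    (s t : E → V) (S : Finset E) (H : Type*) [AddCommGroup H] [Fintype H] :
    (Fintype.card H : ℂ) ^ Fintype.card V * nzFlowCount s t S H =
      ∑ ω : V → AddChar H ℂ,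
        ∏ e ∈ S, if ω (s e) = ω (t e) then (Fintype.card H : ℂ) - 1 else -1 := by
  -- not `classical`, so that the Kirchhoff condition below is decided by the same instance as
  -- in `ite_kirchhoff_eq_sum_prod_sub_apply`
  have := Classical.decEq E
  have := Classical.decEq H
  have hcount : (nzFlowCount s t S H : ℂ) =
      ∑ φ ∈ Fintype.piFinset fun _ : {e // e ∈ S} => univ.erase (0 : H),
        if ∀ x, (∑ e : {e // e ∈ S}, if s e = x then φ e else 0) =
          ∑ e : {e // e ∈ S}, if t e = x then φ e else 0 then 1 else 0 := by
    rw [nzFlowCount, Nat.card_eq_fintype_card, Fintype.card_subtype, sum_boole]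
    congr 2
    ext φ
    simp only [mem_filter, mem_univ, true_and, Fintype.mem_piFinset, mem_erase, ne_eq, and_true]
    exact and_comm
  simp only [hcount, mul_sum, mul_ite, mul_one, mul_zero]
  rw [sum_congr rfl fun φ _ =>
    ite_kirchhoff_eq_sum_prod_sub_apply (fun e : {e // e ∈ S} => s e) (fun e => t e) φ, sum_comm]
  refine sum_congr rfl fun ω _ => ?_
  rw [sum_prod_piFinset, ← prod_coe_sort S]
  refine prod_congr rfl fun e _ => ?_
  rw [sum_erase_eq_sub (mem_univ 0), AddChar.sum_eq_ite, AddChar.map_zero_eq_one]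
  simp only [sub_eq_zero, ite_sub, zero_sub]

lemma sum_prod_ite_eq_of_card_eq {V E α β R : Type*} [Fintype V] [DecidableEq V]
    [Fintype α] [Fintype β] [DecidableEq α] [DecidableEq β] [CommSemiring R]
    (h : Fintype.card α = Fintype.card β) (s t : E → V) (S : Finset E) (a b : R) :
    ∑ ω : V → α, ∏ e ∈ S, (if ω (s e) = ω (t e) then a else b) =
      ∑ ω : V → β, ∏ e ∈ S, (if ω (s e) = ω (t e) then a else b) :=
  Fintype.sum_equiv ((Equiv.refl V).arrowCongr (Fintype.equivOfCardEq h)) _ _ fun ω => by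
    simp [Equiv.arrowCongr_apply]

lemma Sym2.forall_mk_eq_imp_iff {α : Type*} {r : α → α → Prop} (hr : ∀ x y, r x y → r y x)
    {a b : α} :
    (∀ x y, s(a, b) = s(x, y) → r x y) ↔ r a b := by
  refine ⟨fun h => h a b rfl, fun h x y hxy => ?_⟩
  rcases Sym2.eq_iff.1 hxy with ⟨rfl, rfl⟩ | ⟨rfl, rfl⟩
  exacts [h, hr _ _ h]

lemma SimpleGraph.forall_reachable_imp_eq_iff {V α : Type*} (G : SimpleGraph V) (ω : V → α) :
    (∀ x y, G.Reachable x y → ω x = ω y) ↔ ∀ x y, G.Adj x y → ω x = ω y := by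
  refine ⟨fun h x y hxy => h x y hxy.reachable, fun h x y hxy => ?_⟩
  obtain ⟨p⟩ := hxy
  induction p with
  | nil => rfl
  | cons hadj _ ih => exact (h _ _ hadj).trans ih

section Colorings

variable {V E α : Type*} {ε : E → Sym2 V} {s t : E → V}

lemma forall_reachable_fromEdgeSet_imp_eq_iff (hst : ∀ e, ε e = s(s e, t e)) (F : Set E)
    (ω : V → α) :
    (∀ x y, (SimpleGraph.fromEdgeSet (ε '' F)).Reachable x y → ω x = ω y) ↔
      ∀ e ∈ F, ω (s e) = ω (t e) := by
  simp only [SimpleGraph.forall_reachable_imp_eq_iff, SimpleGraph.fromEdgeSet_adj, Set.mem_image]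
  refine ⟨fun h e he => ?_, fun h x y ⟨⟨e, he, hxy⟩, _⟩ => ?_⟩
  · by_cases hloop : s e = t e
    · rw [hloop]
    · exact h _ _ ⟨⟨e, he, hst e⟩, hloop⟩
  · rw [hst e] at hxy
    exact (Sym2.forall_mk_eq_imp_iff (r := fun x y => ω x = ω y) (fun _ _ => Eq.symm)).2
      (h e he) x y hxy

variable [Fintype E]

def monochromaticEdges [DecidableEq α] (s t : E → V) (ω : V → α) : Finset E :=
  {e | ω (s e) = ω (t e)}

variable [Fintype V] [DecidableEq V] [DecidableEq E]

lemma contractionColoringCount_eq_card (hst : ∀ e, ε e = s(s e, t e)) (F : Finset E) (q : ℕ) :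
    contractionColoringCount ε F q = #{ω : V → Fin q | monochromaticEdges s t ω = F} := by
  classical
  rw [contractionColoringCount, Nat.card_eq_fintype_card, Fintype.card_subtype]
  congr 1
  ext ω
  rw [mem_filter, forall_reachable_fromEdgeSet_imp_eq_iff hst]
  simp only [mem_univ, true_and, mem_coe, hst,
    Sym2.forall_mk_eq_imp_iff (r := fun x y => ω x ≠ ω y) (fun _ _ => Ne.symm),
    Finset.ext_iff, monochromaticEdges, mem_filter]
  exact ⟨fun ⟨hin, hout⟩ e => ⟨fun h => by_contra fun he => hout e he h, hin e⟩,
    fun h => ⟨fun e he => (h e).2 he, fun e he hm => he ((h e).1 hm)⟩⟩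

theorem sum_pow_mul_contractionColoringCount {R : Type*} [CommSemiring R]
    (hst : ∀ e, ε e = s(s e, t e)) (q : ℕ) (c : R) :
    ∑ F ∈ univ.powerset, c ^ #F * (contractionColoringCount ε F q : R) =
      ∑ ω : V → Fin q, ∏ e, if ω (s e) = ω (t e) then c else 1 := by
  simp only [contractionColoringCount_eq_card hst, prod_ite, prod_const, one_pow, mul_one,
    powerset_univ]
  refine Eq.trans ?_ (sum_fiberwise' univ (monochromaticEdges s t) (fun F => c ^ #F))
  simp [sum_const, nsmul_eq_mul, mul_comm]

end Colorings

theorem flow_expansion_chromatics_general {V E : Type*} [Fintype V] [Fintype E]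
    [DecidableEq V] [DecidableEq E]
    (ε : E → Sym2 V) (s t : E → V) (hst : ∀ e, ε e = s(s e, t e))
    (q : ℕ) (H : Type*) [AddCommGroup H] [Fintype H]
    (hH : Fintype.card H = q) :
    (nzFlowCount s t Finset.univ H : ℚ) =
      (-1) ^ (Fintype.card E) * (q : ℚ) ^ (-(Fintype.card V : ℤ)) *
        ∑ F ∈ Finset.univ.powerset,
          (1 - (q : ℚ)) ^ F.card * (contractionColoringCount ε F q : ℚ) := by
  have hflow : (q : ℚ) ^ Fintype.card V * nzFlowCount s t univ H =
      ∑ ω : V → Fin q, ∏ e ∈ univ, if ω (s e) = ω (t e) then (q : ℚ) - 1 else -1 := by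
    have h := card_pow_mul_nzFlowCount s t univ H
    rw [sum_prod_ite_eq_of_card_eq (β := Fin q) (by rw [AddChar.card_eq, hH, Fintype.card_fin]),
      hH] at h
    exact_mod_cast h
  have hsign : ∀ ω : V → Fin q, ∏ e ∈ univ, (if ω (s e) = ω (t e) then (q : ℚ) - 1 else -1) =
      (-1) ^ Fintype.card E * ∏ e, if ω (s e) = ω (t e) then 1 - (q : ℚ) else 1 := fun ω => by
    rw [← card_univ, ← prod_neg]
    simp only [neg_ite, neg_sub]
  have hpow : (q : ℚ) ^ Fintype.card V ≠ 0 :=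
    pow_ne_zero _ (hH ▸ Nat.cast_ne_zero.2 Fintype.card_ne_zero)
  rw [sum_pow_mul_contractionColoringCount hst, zpow_neg, zpow_natCast, mul_comm _ (_ ^ _)⁻¹,
    mul_assoc, mul_sum, ← sum_congr rfl fun ω _ => hsign ω, ← hflow, inv_mul_cancel_left₀ hpow]

/-- The flow polynomial as a weighted sum of chromatic polynomials of contractions:
`χ*(G;q) = (-1)^{|E|} q^{-|V|} ∑_{F ⊆ E} (1-q)^{|F|} χ(G/F;q)`, where `(s,t)` is an
orientation of `G` and `H` is any finite abelian group of cardinality `q`. -/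
theorem flow_expansion_chromatics {V E : Type*} [Fintype V] [Fintype E]
    [DecidableEq V] [DecidableEq E]
    (ε : E → Sym2 V) (s t : E → V) (hst : ∀ e, ε e = s(s e, t e))
    (q : ℕ) (hq : 0 < q) (H : Type*) [AddCommGroup H] [Fintype H]
    (hH : Fintype.card H = q) :
    (nzFlowCount s t Finset.univ H : ℚ) =
      (-1) ^ (Fintype.card E) * (q : ℚ) ^ (-(Fintype.card V : ℤ)) *
        ∑ F ∈ Finset.univ.powerset,
          (1 - (q : ℚ)) ^ F.card * (contractionColoringCount ε F q : ℚ) :=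
  flow_expansion_chromatics_general ε s t hst q H hH
end

section
/- Specialization of the Potts model partition function to the chromatic polynomial (Whitney rank expansion): Let G = (V, E, ε) be a finite multigraph and q a positive integer. Then the number of proper q-colorings of G equals ∑_{A ⊆ E} (−1)^{|A|} q^{k_G(A)}, as an identity of integers. -/
open Finset

section Aux

variable {V E : Type*} [Fintype V] [Fintype E] (ε : E → Sym2 V) (q : ℕ)

private lemma walk_eq {A : Finset E} {ω : V → Fin q}
    (h : ∀ e ∈ A, ∀ x y : V, ε e = s(x, y) → ω x = ω y) {u v : V}
    (p : (SimpleGraph.fromEdgeSet (ε '' (A : Set E))).Walk u v) : ω u = ω v := by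
  induction p with
  | nil => rfl
  | @cons a b c hadj p ih =>
    rw [SimpleGraph.fromEdgeSet_adj] at hadj
    obtain ⟨⟨e, heA, hee⟩, hne⟩ := hadj
    exact (h e heA a b hee).trans ih

private lemma card_respects (A : Finset E) :
    Nat.card {ω : V → Fin q // ∀ e ∈ A, ∀ x y : V, ε e = s(x, y) → ω x = ω y}
      = q ^ multigraphComponents ε A := by
  set G := SimpleGraph.fromEdgeSet (ε '' (A : Set E)) with hG
  have equ : {ω : V → Fin q // ∀ e ∈ A, ∀ x y : V, ε e = s(x, y) → ω x = ω y}
      ≃ (G.ConnectedComponent → Fin q) :=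
    { toFun := fun ω => SimpleGraph.ConnectedComponent.lift ω.1
        (fun _ _ p _ => walk_eq ε q ω.2 p)
      invFun := fun f => ⟨fun v => f (G.connectedComponentMk v), by
        intro e he x y hxy
        by_cases hne : x = y
        · rw [hne]
        · have : G.Adj x y := by
            rw [hG, SimpleGraph.fromEdgeSet_adj]
            exact ⟨⟨e, he, hxy⟩, hne⟩
          exact congrArg f (SimpleGraph.ConnectedComponent.sound this.reachable)⟩
      left_inv := fun ω => rfl
      right_inv := fun f => by
        funext c
        induction c using SimpleGraph.ConnectedComponent.ind
        rfl }
  rw [Nat.card_congr equ, Nat.card_fun, Nat.card_eq_fintype_card (α := Fin q),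
    Fintype.card_fin, multigraphComponents]

end Aux

/-- **Whitney rank expansion** : the number of proper `q`-colorings of a multigraph
equals `∑_{A ⊆ E} (-1)^{|A|} q^{k_G(A)}`. -/
theorem chromatic_whitney_expansion {V E : Type*} [Fintype V] [Fintype E]
    (ε : E → Sym2 V) (q : ℕ) (hq : 0 < q) :
    (properColoringCount ε q : ℤ) =
      ∑ A ∈ Finset.univ.powerset, (-1) ^ A.card * (q : ℤ) ^ multigraphComponents ε A := by
  classical
  -- the set of monochromatic edges of a coloring
  set M : (V → Fin q) → Finset E :=
    fun ω => univ.filter (fun e => ∀ x y : V, ε e = s(x, y) → ω x = ω y) with hM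
  have key : ∀ A : Finset E, (q : ℤ) ^ multigraphComponents ε A
      = ∑ ω : V → Fin q, if A ⊆ M ω then (1 : ℤ) else 0 := by
    intro A
    rw [Finset.sum_boole]
    have hiff : ∀ ω : V → Fin q,
        (A ⊆ M ω) ↔ ∀ e ∈ A, ∀ x y : V, ε e = s(x, y) → ω x = ω y := by
      intro ω
      constructor
      · intro hsub e he
        exact (mem_filter.mp (hsub he)).2
      · intro h e he
        exact mem_filter.mpr ⟨mem_univ e, h e he⟩
    have := card_respects ε q A
    rw [Nat.card_eq_fintype_card, Fintype.card_subtype] at this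
    have hfilter : (univ.filter fun ω : V → Fin q => A ⊆ M ω)
        = univ.filter fun ω : V → Fin q => ∀ e ∈ A, ∀ x y : V, ε e = s(x, y) → ω x = ω y := by
      apply filter_congr
      intro ω _
      simp [hiff ω]
    rw [hfilter]
    norm_cast
    exact this.symm
  symm
  calc ∑ A ∈ Finset.univ.powerset, (-1 : ℤ) ^ A.card * (q : ℤ) ^ multigraphComponents ε A
      = ∑ A ∈ Finset.univ.powerset, ∑ ω : V → Fin q,
          (-1 : ℤ) ^ A.card * (if A ⊆ M ω then (1 : ℤ) else 0) := by
        refine Finset.sum_congr rfl fun A _ => ?_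
        rw [key A, Finset.mul_sum]
    _ = ∑ ω : V → Fin q, ∑ A ∈ Finset.univ.powerset,
          (-1 : ℤ) ^ A.card * (if A ⊆ M ω then (1 : ℤ) else 0) := Finset.sum_comm
    _ = ∑ ω : V → Fin q, (if M ω = ∅ then (1 : ℤ) else 0) := by
        refine Finset.sum_congr rfl fun ω _ => ?_
        have h1 : ∀ A : Finset E, (-1 : ℤ) ^ A.card * (if A ⊆ M ω then (1 : ℤ) else 0)
            = if A ∈ (M ω).powerset then (-1 : ℤ) ^ A.card else 0 := by
          intro A
          by_cases h : A ⊆ M ω <;> simp [h, Finset.mem_powerset]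
        simp_rw [h1]
        rw [Finset.sum_ite_mem,
          Finset.inter_eq_right.mpr (Finset.powerset_mono.mpr (Finset.subset_univ _)),
          Finset.sum_powerset_neg_one_pow_card]
    _ = (properColoringCount ε q : ℤ) := by
        rw [Finset.sum_boole]
        have : (univ.filter fun ω : V → Fin q => M ω = ∅).card
            = properColoringCount ε q := by
          rw [properColoringCount, Nat.card_eq_fintype_card, Fintype.card_subtype]
          apply congrArg Finset.card
          apply filter_congr
          intro ω _
          simp only [hM, Finset.filter_eq_empty_iff, mem_univ, true_implies]
          constructor
          · intro h e x y hxy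
            have h' := @h e
            push_neg at h'
            obtain ⟨a, b, hab, hne⟩ := h'
            rw [hxy] at hab
            rcases Sym2.eq_iff.mp hab with ⟨h1, h2⟩ | ⟨h1, h2⟩
            · rw [h1, h2]; exact hne
            · rw [h1, h2]; exact hne.symm
          · intro h e hmono
            obtain ⟨⟨a, b⟩, hab⟩ := Quot.exists_rep (ε e)
            exact h e a b hab.symm (hmono a b hab.symm)
        rw [this]
end

section
/- Specialization of the Potts model partition function to the flow polynomial: Let G = (V, E, ε) be a finite multigraph, fix an orientation (s, t) of G, let q be a positive integer and H any finite abelian group of cardinality q. Then the number of nowhere-zero H-flows of G equals ∑_{A ⊆ E} (−1)^{|E| + |A|} q^{|A| − |V| + k_G(A)}, as an identity in ℚ (the exponent |A| − |V| + k_G(A) is a nonnegative integer for each A). -/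
/-!
By inclusion–exclusion over the edges on which a flow vanishes, the number of nowhere-zero flows
is `∑_A (-1)^{|E|-|A|}` times the number of flows supported in `A`, that is `|ker ∂_A|` for the
boundary map `∂_A : H^A → H^V` of the subgraph `(V, A)`. The image of `∂_A` is the kernel of the
map `H^V → H^{components}` summing over each component: it contains the dipoles `δ_u - δ_v` along
edges, hence along paths, and these span that kernel. Summing over components is onto, so
`|im ∂_A| = q^{|V| - k(A)}` and `|ker ∂_A| = q^{|A| - |V| + k(A)}`.
-/

open Finset

theorem neg_one_pow_card_compl {E : Type*} [Fintype E] [DecidableEq E] (A : Finset E) :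
    (-1 : ℤ) ^ #Aᶜ = (-1) ^ (Fintype.card E + #A) := by
  rw [← card_compl_add_card A, add_assoc, ← two_mul, pow_add, pow_mul, neg_one_sq, one_pow,
    mul_one]

theorem card_forall_ne_zero_eq_sum {α E H : Type*} [Fintype E] [Zero H] [Finite α]
    (f : α → E → H) :
    (Nat.card {a // ∀ e, f a e ≠ 0} : ℤ) =
      ∑ A : Finset E, (-1 : ℤ) ^ (Fintype.card E + #A) * Nat.card {a // ∀ e ∉ A, f a e = 0} := by
  classical
  have := Fintype.ofFinite α
  have hie := inclusion_exclusion_card_inf_compl univ fun e => ({a | f a e = 0} : Finset α)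
  rw [powerset_univ, ← Equiv.sum_comp (compl_involutive.toPerm _)] at hie
  simp only [Nat.card_eq_fintype_card, Fintype.card_subtype]
  convert hie using 3 with A
  · ext a; simp [mem_inf]
  · rw [Function.Involutive.coe_toPerm, neg_one_pow_card_compl]
  · congr 2
    ext a; simp [mem_inf]

theorem AddMonoidHom.card_ker_mul_card_range {G G' : Type*} [AddGroup G] [AddGroup G']
    (f : G →+ G') : Nat.card f.ker * Nat.card f.range = Nat.card G := by
  rw [← AddSubgroup.index_ker, AddSubgroup.card_mul_index]

section FiberSum

variable {V C D H : Type*} [AddCommGroup H] [Fintype V] [DecidableEq C]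

def fiberSum (π : V → C) : (V → H) →+ (C → H) where
  toFun f := ∑ v, (Pi.single (π v) (f v) : C → H)
  map_zero' := by simp
  map_add' f g := by simp only [Pi.add_apply, Pi.single_add, sum_add_distrib]

theorem fiberSum_apply (π : V → C) (f : V → H) :
    fiberSum π f = ∑ v, (Pi.single (π v) (f v) : C → H) := rfl

theorem fiberSum_single [DecidableEq V] (π : V → C) (v : V) (h : H) :
    fiberSum π (Pi.single v h) = Pi.single (π v) h := by
  rw [fiberSum_apply, Fintype.sum_eq_single v fun w hw => by simp [hw]]
  simp

theorem fiberSum_id [DecidableEq V] (f : V → H) : fiberSum id f = f := by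
  rw [fiberSum_apply]
  exact univ_sum_single f

theorem fiberSum_fiberSum [Fintype C] [DecidableEq D] (π : V → C) (ρ : C → D) (f : V → H) :
    fiberSum ρ (fiberSum π f) = fiberSum (ρ ∘ π) f := by
  classical
  simp only [fiberSum_apply π, map_sum, fiberSum_single, fiberSum_apply (ρ ∘ π), Function.comp]

theorem fiberSum_surjective [Fintype C] {π : V → C} (hπ : π.Surjective) :
    (fiberSum π : (V → H) → (C → H)).Surjective := by
  classical
  intro g
  refine ⟨fiberSum (Function.surjInv hπ) g, ?_⟩
  rw [fiberSum_fiberSum, (Function.rightInverse_surjInv hπ).comp_eq_id, fiberSum_id]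

end FiberSum

theorem SimpleGraph.connectedComponentMk_surjective {V : Type*} (G : SimpleGraph V) :
    G.connectedComponentMk.Surjective :=
  Quot.mk_surjective

def underlyingGraph {V E : Type*} (s t : E → V) : SimpleGraph V :=
  SimpleGraph.fromEdgeSet (Set.range fun e => s(s e, t e))

theorem underlyingGraph_reachable {V E : Type*} (s t : E → V) (e : E) :
    (underlyingGraph s t).Reachable (s e) (t e) := by
  by_cases h : s e = t e
  · rw [h]
  · exact SimpleGraph.Adj.reachable ⟨⟨e, rfl⟩, h⟩

section Boundary

variable {V E H : Type*} [AddCommGroup H] [Fintype E] [DecidableEq V]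

def boundary (s t : E → V) : (E → H) →+ (V → H) where
  toFun φ := ∑ e, (Pi.single (s e) (φ e) - Pi.single (t e) (φ e) : V → H)
  map_zero' := by simp
  map_add' φ ψ := by
    simp only [Pi.add_apply, Pi.single_add, add_sub_add_comm, sum_add_distrib]

theorem boundary_apply (s t : E → V) (φ : E → H) :
    boundary s t φ = ∑ e, (Pi.single (s e) (φ e) - Pi.single (t e) (φ e) : V → H) := rfl

theorem boundary_single [DecidableEq E] (s t : E → V) (e : E) (h : H) :
    boundary s t (Pi.single e h) = Pi.single (s e) h - Pi.single (t e) h := by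
  rw [boundary_apply, Fintype.sum_eq_single e fun e' he' => by simp [he']]
  simp

theorem mem_ker_boundary {s t : E → V} {φ : E → H} : φ ∈ (boundary s t).ker ↔
    ∀ x, (∑ e, if s e = x then φ e else 0) = ∑ e, if t e = x then φ e else 0 := by
  simp only [AddMonoidHom.mem_ker, funext_iff, boundary_apply, Finset.sum_apply, sum_sub_distrib,
    sub_eq_zero]
  refine forall_congr' fun x => ?_
  simp only [Pi.single_apply, eq_comm (a := x)]

theorem boundary_subtype (A : Finset E) (s t : E → V) {φ : E → H} (hφ : ∀ e ∉ A, φ e = 0) :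
    boundary (fun e : A => s e) (fun e : A => t e) (fun e => φ e) = boundary s t φ := by
  simp only [boundary_apply]
  refine (sum_subtype A (fun _ => Iff.rfl)
    fun e => (Pi.single (s e) (φ e) - Pi.single (t e) (φ e) : V → H)).symm.trans ?_
  exact sum_subset (subset_univ A) fun e _ he => by simp [hφ e he]

theorem single_sub_single_mem_range_boundary {s t : E → V} {u v : V}
    (huv : (underlyingGraph s t).Reachable u v) (h : H) :
    (Pi.single u h - Pi.single v h : V → H) ∈ (boundary s t).range := by
  classical
  obtain ⟨p⟩ := huv
  induction p with
  | nil => simp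
  | @cons u w v hadj _ ih =>
    rw [← sub_add_sub_cancel _ (Pi.single w h)]
    refine add_mem ?_ ih
    obtain ⟨⟨e, he⟩, -⟩ := hadj
    rcases Sym2.eq_iff.mp he with ⟨rfl, rfl⟩ | ⟨rfl, rfl⟩
    · exact ⟨Pi.single e h, boundary_single s t e h⟩
    · exact ⟨Pi.single e (-h), by rw [boundary_single, Pi.single_neg, Pi.single_neg, neg_sub_neg]⟩

theorem range_boundary [Fintype V] (s t : E → V)
    [DecidableEq (underlyingGraph s t).ConnectedComponent] :
    (boundary s t : (E → H) →+ (V → H)).range =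
      (fiberSum (underlyingGraph s t).connectedComponentMk).ker := by
  have := Fintype.ofFinite (underlyingGraph s t).ConnectedComponent
  apply le_antisymm
  · rintro _ ⟨φ, rfl⟩
    rw [AddMonoidHom.mem_ker, boundary_apply, map_sum]
    refine sum_eq_zero fun e _ => ?_
    rw [map_sub, fiberSum_single, fiberSum_single,
      SimpleGraph.ConnectedComponent.sound (underlyingGraph_reachable s t e), sub_self]
  · intro f hf
    have hmk := (underlyingGraph s t).connectedComponentMk_surjective
    let r := Function.surjInv hmk ∘ (underlyingGraph s t).connectedComponentMk
    have hr : fiberSum r f = 0 := by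
      rw [← fiberSum_fiberSum, AddMonoidHom.mem_ker.mp hf, map_zero]
    have hf : f = ∑ x, (Pi.single x (f x) - Pi.single (r x) (f x)) := by
      rw [sum_sub_distrib, univ_sum_single, ← fiberSum_apply r, hr, sub_zero]
    rw [hf]
    exact sum_mem fun x _ => single_sub_single_mem_range_boundary
      (SimpleGraph.ConnectedComponent.exact (Function.surjInv_eq hmk _).symm) _

theorem card_ker_boundary_mul_pow [Fintype V] [Finite H] (s t : E → V) :
    Nat.card (boundary s t : (E → H) →+ (V → H)).ker * Nat.card H ^ Nat.card V =
      Nat.card H ^ (Nat.card E + Nat.card (underlyingGraph s t).ConnectedComponent) := by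
  classical
  have := Fintype.ofFinite (underlyingGraph s t).ConnectedComponent
  have hσ := (fiberSum (H := H) (underlyingGraph s t).connectedComponentMk).card_ker_mul_card_range
  rw [AddMonoidHom.range_eq_top.mpr
      (fiberSum_surjective (SimpleGraph.connectedComponentMk_surjective _)),
    AddSubgroup.card_top, ← range_boundary] at hσ
  have hbd := (boundary s t : (E → H) →+ (V → H)).card_ker_mul_card_range
  simp only [Nat.card_fun] at hσ hbd
  rw [← hσ, pow_add, ← hbd, mul_assoc]

theorem card_ker_boundary_subtype (s t : E → V) (A : Finset E) :
    Nat.card (boundary (fun e : A => s e) (fun e : A => t e) : (A → H) →+ (V → H)).ker =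
      Nat.card {φ : (boundary s t : (E → H) →+ (V → H)).ker // ∀ e ∉ A, φ.1 e = 0} := by
  classical
  exact Nat.card_congr
    { toFun := fun ψ => ⟨⟨fun e => if h : e ∈ A then ψ.1 ⟨e, h⟩ else 0, by
        rw [AddMonoidHom.mem_ker, ← boundary_subtype A s t fun e he => dif_neg he]
        convert AddMonoidHom.mem_ker.mp ψ.2 using 2
        exact funext fun e => dif_pos e.2⟩, fun e he => dif_neg he⟩
      invFun := fun φ => ⟨fun e => φ.1.1 e, by
        rw [AddMonoidHom.mem_ker, boundary_subtype A s t φ.2]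
        exact φ.1.2⟩
      left_inv := fun ψ => by ext e; simp
      right_inv := fun φ => by
        ext e
        by_cases he : e ∈ A
        · simp [he]
        · simp [he, φ.2 e he] }

theorem nzFlowCount_univ [Fintype V] [Fintype H] (s t : E → V) :
    nzFlowCount s t univ H =
      Nat.card {φ : (boundary s t : (E → H) →+ (V → H)).ker // ∀ e, φ.1 e ≠ 0} :=
  Nat.card_congr
    { toFun := fun ψ => ⟨⟨fun e => ψ.1 ⟨e, mem_univ e⟩, by
        rw [AddMonoidHom.mem_ker, ← boundary_subtype univ s t (by simp)]
        exact AddMonoidHom.mem_ker.mp (mem_ker_boundary.mpr ψ.2.1)⟩, fun e => ψ.2.2 _⟩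
      invFun := fun φ => ⟨fun e => φ.1.1 e, mem_ker_boundary.mp (by
        rw [AddMonoidHom.mem_ker, boundary_subtype univ s t (by simp)]
        exact φ.1.2), fun e => φ.2 e⟩
      left_inv := fun _ => rfl
      right_inv := fun _ => rfl }

theorem card_supported_flows_eq_zpow [Fintype V] [Fintype H] (s t : E → V) (A : Finset E) :
    (Nat.card {φ : (boundary s t : (E → H) →+ (V → H)).ker // ∀ e ∉ A, φ.1 e = 0} : ℚ) =
      (Fintype.card H : ℚ) ^
        ((#A : ℤ) - Fintype.card V + multigraphComponents (fun e => s(s e, t e)) A) := by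
  have hcard := card_ker_boundary_mul_pow (H := H) (fun e : A => s e) (fun e : A => t e)
  have hk : Nat.card (underlyingGraph (fun e : A => s e) (fun e : A => t e)).ConnectedComponent =
      multigraphComponents (fun e => s(s e, t e)) A := by
    rw [multigraphComponents, underlyingGraph, Set.image_eq_range]
    rfl
  rw [hk, card_ker_boundary_subtype] at hcard
  simp only [Nat.card_eq_fintype_card, Fintype.card_coe] at hcard
  have hq : (Fintype.card H : ℚ) ≠ 0 := Nat.cast_ne_zero.mpr Fintype.card_ne_zero
  rw [sub_add_eq_add_sub, zpow_sub₀ hq, ← Nat.cast_add, zpow_natCast, zpow_natCast,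
    eq_div_iff (pow_ne_zero _ hq)]
  exact_mod_cast hcard

end Boundary

theorem flow_whitney_expansion_general {V E : Type*} [Fintype V] [Fintype E]
    [DecidableEq V]
    (ε : E → Sym2 V) (s t : E → V) (hst : ∀ e, ε e = s(s e, t e))
    (q : ℕ) (H : Type*) [AddCommGroup H] [Fintype H]
    (hH : Fintype.card H = q) :
    (nzFlowCount s t Finset.univ H : ℚ) =
      ∑ A ∈ Finset.univ.powerset, (-1) ^ (Fintype.card E + A.card) *
        (q : ℚ) ^ ((A.card : ℤ) - (Fintype.card V : ℤ) + (multigraphComponents ε A : ℤ)) := by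
  obtain rfl : ε = fun e => s(s e, t e) := funext hst
  subst hH
  have hie := card_forall_ne_zero_eq_sum fun φ : (boundary s t : (E → H) →+ (V → H)).ker => φ.1
  rw [nzFlowCount_univ, ← Int.cast_natCast, hie, powerset_univ]
  push_cast
  exact sum_congr rfl fun A _ => by rw [card_supported_flows_eq_zpow]

/-- Specialization of the Potts model partition function to the flow polynomial:
the number of nowhere-zero `H`-flows of `G` equals
`∑_{A ⊆ E} (-1)^{|E|+|A|} q^{|A|-|V|+k_G(A)}`, where `|H| = q`. -/
theorem flow_whitney_expansion {V E : Type*} [Fintype V] [Fintype E]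
    [DecidableEq V] [DecidableEq E]
    (ε : E → Sym2 V) (s t : E → V) (hst : ∀ e, ε e = s(s e, t e))
    (q : ℕ) (hq : 0 < q) (H : Type*) [AddCommGroup H] [Fintype H]
    (hH : Fintype.card H = q) :
    (nzFlowCount s t Finset.univ H : ℚ) =
      ∑ A ∈ Finset.univ.powerset, (-1) ^ (Fintype.card E + A.card) *
        (q : ℚ) ^ ((A.card : ℤ) - (Fintype.card V : ℤ) + (multigraphComponents ε A : ℤ)) :=
  flow_whitney_expansion_general ε s t hst q H hH
end

section
/- The number of flows of a graph: Let G = (V, E, ε) be a finite multigraph with an orientation (s, t), and let H be a finite abelian group of cardinality q. Then the number of H-flows of G (not necessarily nowhere-zero) equals q^{|E| − |V| + k_G(E)}. -/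
open Finset
open scoped Classical

/-- The number of `H`-flows (not necessarily nowhere-zero) of the multigraph with
orientation given by source and target maps `s t : E → V`. -/
noncomputable def flowCount {V E : Type*} [Fintype V] [Fintype E] [DecidableEq V]
    (s t : E → V) (H : Type*) [AddCommGroup H] [Fintype H] : ℕ :=
  Nat.card {φ : E → H //
    ∀ x : V, (∑ e : E, if s e = x then φ e else 0) =
             (∑ e : E, if t e = x then φ e else 0)}


section Aux
variable {V E : Type*} [Fintype V] [Fintype E] [DecidableEq V]
    (s t : E → V) (H : Type*) [AddCommGroup H] [Fintype H]

private lemma ite_swap {α : Type*} [Zero α] {p q : Prop} [Decidable p] [Decidable q] (a : α) :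
    (if p then if q then a else 0 else 0) = if q then if p then a else 0 else 0 := by
  split_ifs <;> rfl

/-- boundary map -/
noncomputable def dmap : (E → H) →+ (V → H) where
  toFun φ x := ∑ e : E, ((if s e = x then φ e else 0) - (if t e = x then φ e else 0))
  map_zero' := by funext x; simp
  map_add' φ ψ := by
    funext x
    simp only [Pi.add_apply]
    rw [← Finset.sum_add_distrib]
    congr 1; funext e
    split_ifs <;> abel

variable (G : SimpleGraph V)

/-- per-component sum map -/
noncomputable def smap : (V → H) →+ (G.ConnectedComponent → H) where
  toFun f c := ∑ x : V, if G.connectedComponentMk x = c then f x else 0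
  map_zero' := by funext c; simp
  map_add' f g := by
    funext c
    simp only [Pi.add_apply]
    rw [← Finset.sum_add_distrib]
    congr 1; funext x
    split_ifs <;> simp

lemma dmap_single (e : E) (a : H) :
    dmap s t H (Pi.single e a) =
      fun x => (if s e = x then a else 0) - (if t e = x then a else 0) := by
  classical
  funext x
  simp only [dmap, AddMonoidHom.coe_mk, ZeroHom.coe_mk]
  rw [Finset.sum_eq_single e]
  · simp
  · intro e' _ he'
    simp [Pi.single_apply, he']
  · simp

lemma pair_mem_range (u v : V) (h : G.Reachable u v) (a : H)
    (hadj : ∀ u v, G.Adj u v → ∃ e, (s e = u ∧ t e = v) ∨ (s e = v ∧ t e = u)) :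
    (fun x => (if u = x then a else 0) - (if v = x then a else 0)) ∈ (dmap s t H).range := by
  classical
  obtain ⟨w⟩ := h
  induction w with
  | nil =>
    exact ⟨0, by funext x; simp⟩
  | @cons u w v h p ih =>
    have h1 : (fun x => (if u = x then a else 0) - (if w = x then a else 0))
        ∈ (dmap s t H).range := by
      obtain ⟨e, he⟩ := hadj u w h
      rcases he with ⟨h1, h2⟩ | ⟨h1, h2⟩
      · exact ⟨Pi.single e a, by rw [dmap_single]; funext x; rw [h1, h2]⟩
      · refine ⟨Pi.single e (-a), ?_⟩
        rw [dmap_single]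
        funext x
        rw [h1, h2]
        split_ifs <;> abel
    have := add_mem h1 ih
    convert this using 1
    funext x
    simp only [Pi.add_apply]
    abel

end Aux

section Main
variable {V E : Type*} [Fintype V] [Fintype E] [DecidableEq V]
    (s t : E → V) (H : Type*) [AddCommGroup H] [Fintype H] (G : SimpleGraph V)

lemma range_le_ker (hend : ∀ e, G.connectedComponentMk (s e) = G.connectedComponentMk (t e)) :
    (dmap s t H).range ≤ (smap H G).ker := by
  rintro _ ⟨φ, rfl⟩
  show smap H G (dmap s t H φ) = 0
  funext c
  show (∑ x : V, if G.connectedComponentMk x = c then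
      ∑ e : E, ((if s e = x then φ e else 0) - (if t e = x then φ e else 0)) else 0) = 0
  have : ∀ x : V, (if G.connectedComponentMk x = c then
      ∑ e : E, ((if s e = x then φ e else 0) - (if t e = x then φ e else 0)) else 0)
      = ∑ e : E, ((if s e = x then (if G.connectedComponentMk x = c then φ e else 0) else 0)
        - (if t e = x then (if G.connectedComponentMk x = c then φ e else 0) else 0)) := by
    intro x
    split_ifs with h <;> simp [h]
  rw [Finset.sum_congr rfl (fun x _ => this x), Finset.sum_comm]
  apply Finset.sum_eq_zero
  intro e _
  rw [Finset.sum_sub_distrib, Finset.sum_ite_eq Finset.univ (s e)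
    (fun x => if G.connectedComponentMk x = c then φ e else 0),
    Finset.sum_ite_eq Finset.univ (t e)
    (fun x => if G.connectedComponentMk x = c then φ e else 0)]
  simp [hend e]

lemma ker_le_range (hadj : ∀ u v, G.Adj u v → ∃ e, (s e = u ∧ t e = v) ∨ (s e = v ∧ t e = u)) :
    (smap H G).ker ≤ (dmap s t H).range := by
  intro f hf
  have hf' : ∀ c, (∑ x : V, if G.connectedComponentMk x = c then f x else 0) = 0 :=
    fun c => congrFun hf c
  haveI : Finite G.ConnectedComponent := Quot.finite _
  haveI : Fintype G.ConnectedComponent := Fintype.ofFinite _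
  -- f = ∑_y pair_fun y (rep (mk y)) (f y)
  have key : f = ∑ y : V, (fun x =>
      (if y = x then f y else 0) - (if (G.connectedComponentMk y).out = x then f y else 0)) := by
    funext x
    rw [Finset.sum_apply]
    rw [Finset.sum_sub_distrib]
    have h1 : (∑ y : V, if y = x then f y else 0) = f x := by
      rw [Finset.sum_ite_eq' Finset.univ x f]; simp
    have h2 : (∑ y : V, if (G.connectedComponentMk y).out = x then f y else 0) = 0 := by
      have : ∀ y : V, (if (G.connectedComponentMk y).out = x then f y else 0)
          = ∑ c : G.ConnectedComponent,
            if G.connectedComponentMk y = c then (if c.out = x then f y else 0) else 0 := by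
        intro y
        rw [Finset.sum_ite_eq Finset.univ (G.connectedComponentMk y)
          (fun c => if c.out = x then f y else 0), if_pos (Finset.mem_univ _)]
      rw [Finset.sum_congr rfl (fun y _ => this y), Finset.sum_comm]
      apply Finset.sum_eq_zero
      intro c _
      have : (∑ y : V, if G.connectedComponentMk y = c then (if c.out = x then f y else 0) else 0)
          = if c.out = x then (∑ y : V, if G.connectedComponentMk y = c then f y else 0) else 0 := by
        split_ifs with h
        · rfl
        · apply Finset.sum_eq_zero; intro y _; simp [h]
      rw [this, hf' c]
      simp
    rw [h1, h2, sub_zero]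
  rw [key]
  apply AddSubgroup.sum_mem
  intro y _
  apply pair_mem_range s t H G
  · have : G.connectedComponentMk ((G.connectedComponentMk y).out) = G.connectedComponentMk y :=
      (G.connectedComponentMk y).out_eq
    exact (SimpleGraph.ConnectedComponent.exact this).symm
  · exact hadj

lemma smap_surjective : Function.Surjective (smap H G) := by
  intro g
  haveI : Finite G.ConnectedComponent := Quot.finite _
  haveI : Fintype G.ConnectedComponent := Fintype.ofFinite _
  refine ⟨fun x => ∑ c : G.ConnectedComponent, if x = c.out then g c else 0, ?_⟩
  funext c
  show (∑ x : V, if G.connectedComponentMk x = c then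
      (∑ c' : G.ConnectedComponent, if x = c'.out then g c' else 0) else 0) = g c
  have : ∀ x : V, (if G.connectedComponentMk x = c then
      (∑ c' : G.ConnectedComponent, if x = c'.out then g c' else 0) else 0)
      = ∑ c' : G.ConnectedComponent,
        (if x = c'.out then (if G.connectedComponentMk x = c then g c' else 0) else 0) := by
    intro x
    split_ifs with h <;> simp [h]
  rw [Finset.sum_congr rfl (fun x _ => this x), Finset.sum_comm]
  have : ∀ c' : G.ConnectedComponent,
      (∑ x : V, if x = c'.out then (if G.connectedComponentMk x = c then g c' else 0) else 0)
      = if G.connectedComponentMk c'.out = c then g c' else 0 := by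
    intro c'
    rw [Finset.sum_ite_eq' Finset.univ c'.out
      (fun x => if G.connectedComponentMk x = c then g c' else 0)]
    simp
  rw [Finset.sum_congr rfl (fun c' _ => this c')]
  have : ∀ c' : G.ConnectedComponent, G.connectedComponentMk c'.out = c' := fun c' => c'.out_eq
  rw [Finset.sum_congr rfl (fun c' _ => by rw [this c'])]
  rw [Finset.sum_ite_eq' Finset.univ c g, if_pos (Finset.mem_univ _)]

end Main


/-- The number of `H`-flows of a multigraph `G` equals `q^{|E| - |V| + k_G(E)}`,
where `q = |H|`. -/
theorem card_flows {V E : Type*} [Fintype V] [Fintype E] [DecidableEq V]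
    (ε : E → Sym2 V) (s t : E → V) (hst : ∀ e, ε e = s(s e, t e))
    (H : Type*) [AddCommGroup H] [Fintype H] :
    (flowCount s t H : ℚ) =
      (Fintype.card H : ℚ) ^ ((Fintype.card E : ℤ) - (Fintype.card V : ℤ) +
        (multigraphComponents ε Finset.univ : ℤ)) := by
  classical
  set G := SimpleGraph.fromEdgeSet (ε '' ((Finset.univ : Finset E) : Set E)) with hG
  haveI : Finite G.ConnectedComponent := Quot.finite _
  have hend : ∀ e, G.connectedComponentMk (s e) = G.connectedComponentMk (t e) := by
    intro e
    by_cases h : s e = t e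
    · rw [h]
    · refine SimpleGraph.ConnectedComponent.sound (SimpleGraph.Adj.reachable ?_)
      rw [hG, SimpleGraph.fromEdgeSet_adj]
      exact ⟨⟨e, by simp, hst e⟩, h⟩
  have hadj : ∀ u v, G.Adj u v → ∃ e, (s e = u ∧ t e = v) ∨ (s e = v ∧ t e = u) := by
    intro u v h
    rw [hG, SimpleGraph.fromEdgeSet_adj] at h
    obtain ⟨⟨e, -, he⟩, hne⟩ := h
    rw [hst e] at he
    exact ⟨e, Sym2.eq_iff.mp he⟩
  have hrk : (dmap s t H).range = (smap H G).ker :=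
    le_antisymm (range_le_ker s t H G hend) (ker_le_range s t H G hadj)
  have hflow : flowCount s t H = Nat.card ((dmap s t H).ker) := by
    apply Nat.card_congr
    apply Equiv.subtypeEquivRight
    intro φ
    rw [AddMonoidHom.mem_ker, funext_iff]
    apply forall_congr'
    intro x
    show _ ↔ (∑ e : E, ((if s e = x then φ e else 0) - (if t e = x then φ e else 0))) = _
    rw [Finset.sum_sub_distrib]
    change _ ↔ _ = (0 : V → H) x
    rw [Pi.zero_apply, sub_eq_zero]
  -- cardinalities
  have h1 : Nat.card (E → H) = Nat.card ((dmap s t H).range) * Nat.card ((dmap s t H).ker) := by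
    rw [AddSubgroup.card_eq_card_quotient_mul_card_addSubgroup (dmap s t H).ker]
    congr 1
    exact Nat.card_congr (QuotientAddGroup.quotientKerEquivRange (dmap s t H)).toEquiv
  have h3 : Nat.card (V → H) = Nat.card (G.ConnectedComponent → H) * Nat.card ((smap H G).ker) := by
    rw [AddSubgroup.card_eq_card_quotient_mul_card_addSubgroup (smap (V := V) H G).ker]
    congr 1
    exact Nat.card_congr
      (QuotientAddGroup.quotientKerEquivOfSurjective (smap H G) (smap_surjective H G)).toEquiv
  rw [hrk] at h1
  set q : ℕ := Fintype.card H with hq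
  set nC : ℕ := multigraphComponents ε Finset.univ with hnC
  have hnC' : Nat.card G.ConnectedComponent = nC := rfl
  have hqE : Nat.card (E → H) = q ^ Fintype.card E := by
    rw [Nat.card_fun, Nat.card_eq_fintype_card, Nat.card_eq_fintype_card]
  have hqV : Nat.card (V → H) = q ^ Fintype.card V := by
    rw [Nat.card_fun, Nat.card_eq_fintype_card, Nat.card_eq_fintype_card]
  have hqC : Nat.card (G.ConnectedComponent → H) = q ^ nC := by
    rw [Nat.card_fun, Nat.card_eq_fintype_card, hnC']
  rw [hqE] at h1
  rw [hqV, hqC] at h3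
  -- pass to ℚ
  have hq0 : (q : ℚ) ≠ 0 := by
    simp [hq, Fintype.card_ne_zero]
  have hK0 : (Nat.card ((smap (V := V) H G).ker) : ℚ) ≠ 0 := by
    have : Nat.card ((smap (V := V) H G).ker) ≠ 0 := Nat.card_pos.ne'
    exact_mod_cast this
  have e1 : ((q : ℚ)) ^ Fintype.card E
      = (Nat.card ((smap (V := V) H G).ker) : ℚ) * (flowCount s t H : ℚ) := by
    rw [hflow]; exact_mod_cast congrArg (Nat.cast (R := ℚ)) h1
  have e2 : ((q : ℚ)) ^ Fintype.card V
      = (q : ℚ) ^ nC * (Nat.card ((smap (V := V) H G).ker) : ℚ) := by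
    exact_mod_cast congrArg (Nat.cast (R := ℚ)) h3
  rw [zpow_add₀ hq0, zpow_sub₀ hq0, zpow_natCast, zpow_natCast, zpow_natCast]
  rw [div_mul_eq_mul_div, eq_div_iff (by positivity)]
  calc (flowCount s t H : ℚ) * (q:ℚ) ^ Fintype.card V
      = (flowCount s t H : ℚ) * ((q : ℚ) ^ nC * (Nat.card ((smap (V := V) H G).ker) : ℚ)) := by
        rw [← e2]
    _ = ((Nat.card ((smap (V := V) H G).ker) : ℚ) * (flowCount s t H : ℚ)) * (q:ℚ)^nC := by ring
    _ = (q:ℚ) ^ Fintype.card E * (q:ℚ) ^ nC := by rw [← e1]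
end

section
/- Multiplied form of Biggs formula for graphs (division-free version): Let G = (V, E, ε) be a finite multigraph, K a commutative ring, q ∈ K, and let v = (v_e)_{e∈E} and u = (u_e)_{e∈E} be families in K. Then (∏_{e∈E} u_e) · Z(G; q, v) = ∑_{F ⊆ E} (∏_{e∈F} (u_e − v_e)) · (∏_{e∈E∖F} v_e) · Z(G − F; q, (u_e)_{e∈E∖F}). -/
open Finset

/-- Division-free (multiplied) form of Biggs formula for graphs:
`(∏_{e∈E} u_e) Z(G;q,v) = ∑_{F ⊆ E} (∏_{e∈F} (u_e - v_e)) (∏_{e∈E∖F} v_e) Z(G-F;q,u)`,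
where `Z(G;q,v) = ∑_{A ⊆ E} q^{k_G(A)} ∏_{e∈A} v_e` and the partition function of the
deletion `G-F` is `∑_{A ⊆ E∖F} q^{k_G(A)} ∏_{e∈A} u_e`. -/
theorem potts_biggs_formula_multiplied {V E K : Type*} [Fintype V] [Fintype E]
    [DecidableEq E] [CommRing K] (ε : E → Sym2 V) (q : K) (v u : E → K) :
    (∏ e : E, u e) * ∑ A ∈ Finset.univ.powerset, q ^ multigraphComponents ε A * ∏ e ∈ A, v e =
      ∑ F ∈ Finset.univ.powerset,
        (∏ e ∈ F, (u e - v e)) * (∏ e ∈ Finset.univ \ F, v e) *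
          ∑ A ∈ (Finset.univ \ F).powerset,
            q ^ multigraphComponents ε A * ∏ e ∈ A, u e := by
  have key : ∀ A ∈ (Finset.univ : Finset E).powerset,
      (∏ e : E, u e) * (q ^ multigraphComponents ε A * ∏ e ∈ A, v e) =
      ∑ F ∈ (Finset.univ \ A).powerset,
        (∏ e ∈ F, (u e - v e)) * (∏ e ∈ Finset.univ \ F, v e) *
          (q ^ multigraphComponents ε A * ∏ e ∈ A, u e) := by
    intro A hA
    have hA' : A ⊆ (Finset.univ : Finset E) := Finset.mem_powerset.mp hA
    have h1 : ∀ F ∈ (Finset.univ \ A).powerset,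
        (∏ e ∈ F, (u e - v e)) * (∏ e ∈ Finset.univ \ F, v e) *
          (q ^ multigraphComponents ε A * ∏ e ∈ A, u e)
        = ((∏ e ∈ F, (u e - v e)) * ∏ e ∈ (Finset.univ \ A) \ F, v e) *
          ((∏ e ∈ A, v e) * (q ^ multigraphComponents ε A * ∏ e ∈ A, u e)) := by
      intro F hF
      have hF' : F ⊆ Finset.univ \ A := Finset.mem_powerset.mp hF
      have hsub : A ⊆ Finset.univ \ F := by
        rw [Finset.subset_sdiff] at hF' ⊢
        exact ⟨Finset.subset_univ _, hF'.2.symm⟩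
      have hps := Finset.prod_sdiff (f := v) hsub
      rw [← hps, sdiff_sdiff_comm]
      ring
    rw [Finset.sum_congr rfl h1, ← Finset.sum_mul, ← Finset.prod_add]
    have : (∏ e ∈ Finset.univ \ A, (u e - v e + v e)) = ∏ e ∈ Finset.univ \ A, u e := by
      apply Finset.prod_congr rfl
      intro x _
      ring
    rw [this]
    have hpu := Finset.prod_sdiff (f := u) hA'
    rw [← hpu]
    ring
  rw [Finset.mul_sum, Finset.sum_congr rfl key]
  rw [Finset.sum_comm' (s := (Finset.univ : Finset E).powerset)
    (t := fun A => (Finset.univ \ A).powerset)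
    (t' := (Finset.univ : Finset E).powerset)
    (s' := fun F => (Finset.univ \ F).powerset)
    (by
      intro A F
      simp only [Finset.mem_powerset, Finset.subset_sdiff, Finset.subset_univ, true_and,
        and_true]
      exact ⟨fun h => h.symm, fun h => h.symm⟩)]
  apply Finset.sum_congr rfl
  intro F _
  rw [Finset.mul_sum]
end
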